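/- arXiv:1011.5934 — 6 statements merged into one kernel-verified Lean document; each statement's English description precedes it below -/
import Mathlib

section
/- Let h : ℂ → ℂ be the piecewise linear map h(z) = 2z + conj(z) for Im z ≥ 0 and h(z) = z + 2·conj(z) for Im z ≤ 0. Then h is Lipschitz continuous, satisfies h_z · conj(h_{z̄}) ≡ 2 almost everywhere (so its Hopf differential is holomorphic), but h is not harmonic on any neighborhood of a point of the real axis. -/
open Complex MeasureTheory Metric Filter
open scoped Real Topology

/-- Wirtinger derivative ∂f/∂z = (∂f/∂x - i ∂f/∂y)/2. -/
noncomputable def wz (f : ℂ → ℂ) (z : ℂ) : ℂ :=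
  (fderiv ℝ f z 1 - Complex.I * fderiv ℝ f z Complex.I) / 2

/-- Wirtinger derivative ∂f/∂z̄ = (∂f/∂x + i ∂f/∂y)/2. -/
noncomputable def wzbar (f : ℂ → ℂ) (z : ℂ) : ℂ :=
  (fderiv ℝ f z 1 + Complex.I * fderiv ℝ f z Complex.I) / 2

/-- Complex Laplacian Δf = ∂²f/∂x² + ∂²f/∂y². -/
noncomputable def lapC (f : ℂ → ℂ) (z : ℂ) : ℂ :=
  fderiv ℝ (fun w => fderiv ℝ f w 1) z 1 + fderiv ℝ (fun w => fderiv ℝ f w Complex.I) z Complex.I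

/-- A map is harmonic on `U` if it is `C²` there with vanishing Laplacian. -/
def HarmonicOnC (f : ℂ → ℂ) (U : Set ℂ) : Prop :=
  ContDiffOn ℝ 2 f U ∧ ∀ z ∈ U, lapC f z = 0

open ComplexConjugate

/-!
Writing `h z = 3 Re z + i |Im z|` makes the Lipschitz bound immediate. On each open half-plane
`h` is the `ℝ`-linear map `z ↦ a z + b z̄` with `(a, b) = (2, 1)` or `(1, 2)`, so
`h_z · conj h_z̄ = a b̄ = 2` off the real axis, which is a null set. Along the vertical line
through a real point, `Im h` is `t ↦ |t|`, so `h` is not even differentiable on the real axis.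
-/

noncomputable def foldMap (z : ℂ) : ℂ := ⟨3 * z.re, |z.im|⟩

lemma foldMap_eq_ite (z : ℂ) :
    foldMap z = if 0 ≤ z.im then 2 * z + conj z else z + 2 * conj z := by
  split_ifs with hz
  · apply Complex.ext <;> simp [foldMap, abs_of_nonneg hz] <;> ring
  · apply Complex.ext <;> simp [foldMap, abs_of_neg (not_le.mp hz)] <;> ring

lemma lipschitzWith_mk_re_im {K : NNReal} {f g : ℝ → ℝ} (hf : LipschitzWith K f)
    (hg : LipschitzWith K g) : LipschitzWith K fun z : ℂ => (⟨f z.re, g z.im⟩ : ℂ) := by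
  have sq_le {φ : ℝ → ℝ} (hφ : LipschitzWith K φ) (s t : ℝ) :
      (φ s - φ t) ^ 2 ≤ K ^ 2 * (s - t) ^ 2 := by
    simpa [Real.dist_eq, mul_pow, sq_abs] using
      pow_le_pow_left₀ dist_nonneg (hφ.dist_le_mul s t) 2
  refine LipschitzWith.of_dist_le_mul fun z w => ?_
  rw [Complex.dist_eq_re_im, Complex.dist_eq_re_im, ← Real.sqrt_sq K.coe_nonneg,
    ← Real.sqrt_mul (sq_nonneg _)]
  apply Real.sqrt_le_sqrt
  linarith [sq_le hf z.re w.re, sq_le hg z.im w.im]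

lemma lipschitzWith_foldMap : LipschitzWith 3 foldMap := by
  have h3 : LipschitzWith 3 fun x : ℝ => 3 * x :=
    LipschitzWith.of_dist_le_mul fun x y => by simp [Real.dist_eq, ← mul_sub, abs_mul]
  exact lipschitzWith_mk_re_im h3 (lipschitzWith_one_norm.weaken (by norm_num))

lemma hasFDerivAt_mul_add_mul_conj (a b z : ℂ) :
    HasFDerivAt (fun w : ℂ => a * w + b * conj w)
      (a • ContinuousLinearMap.id ℝ ℂ + b • (conjCLE : ℂ →L[ℝ] ℂ)) z :=
  ((hasFDerivAt_id z).const_smul a).add (conjCLE.toContinuousLinearMap.hasFDerivAt.const_smul b)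

section Wirtinger

variable {f : ℂ → ℂ} {a b z : ℂ}

lemma fderiv_apply_one_and_I_of_eventuallyEq (hf : f =ᶠ[𝓝 z] fun w => a * w + b * conj w) :
    fderiv ℝ f z 1 = a + b ∧ fderiv ℝ f z I = (a - b) * I := by
  rw [((hasFDerivAt_mul_add_mul_conj a b z).congr_of_eventuallyEq hf).fderiv]
  simp only [add_apply, smul_apply, ContinuousLinearMap.id_apply, smul_eq_mul,
    ContinuousLinearEquiv.coe_coe, ContinuousAlgEquiv.coeCLE_apply, conjCAE_apply, map_one, conj_I]
  constructor <;> ring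

lemma wz_of_eventuallyEq (hf : f =ᶠ[𝓝 z] fun w => a * w + b * conj w) : wz f z = a := by
  obtain ⟨h1, hI⟩ := fderiv_apply_one_and_I_of_eventuallyEq hf
  rw [wz, h1, hI]
  linear_combination (b - a) / 2 * I_sq

lemma wzbar_of_eventuallyEq (hf : f =ᶠ[𝓝 z] fun w => a * w + b * conj w) : wzbar f z = b := by
  obtain ⟨h1, hI⟩ := fderiv_apply_one_and_I_of_eventuallyEq hf
  rw [wzbar, h1, hI]
  linear_combination (a - b) / 2 * I_sq

end Wirtinger

lemma volume_setOf_im_eq (c : ℝ) : volume {z : ℂ | z.im = c} = 0 := by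
  have hline : {z : ℂ | z.im = c} = measurableEquivRealProd ⁻¹' (Set.univ ×ˢ {c}) := by
    ext z; simp
  rw [hline, volume_preserving_equiv_real_prod.measure_preimage
    (MeasurableSet.univ.prod (measurableSet_singleton c)).nullMeasurableSet,
    Measure.volume_eq_prod, Measure.prod_prod]
  simp

lemma wz_mul_conj_wzbar_foldMap {z : ℂ} (hz : z.im ≠ 0) :
    wz foldMap z * conj (wzbar foldMap z) = 2 := by
  rcases hz.lt_or_gt with hneg | hpos
  · have hf : foldMap =ᶠ[𝓝 z] fun w => 1 * w + 2 * conj w := by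
      filter_upwards [(isOpen_lt continuous_im continuous_const).mem_nhds hneg] with w hw
      rw [foldMap_eq_ite, if_neg (not_le.mpr hw), one_mul]
    rw [wz_of_eventuallyEq hf, wzbar_of_eventuallyEq hf]
    simp [map_ofNat]
  · have hf : foldMap =ᶠ[𝓝 z] fun w => 2 * w + 1 * conj w := by
      filter_upwards [(isOpen_lt continuous_const continuous_im).mem_nhds hpos] with w hw
      rw [foldMap_eq_ite, if_pos hw.le, one_mul]
    rw [wz_of_eventuallyEq hf, wzbar_of_eventuallyEq hf]
    simp

lemma not_differentiableAt_foldMap_ofReal (x : ℝ) : ¬ DifferentiableAt ℝ foldMap x := by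
  intro hd
  have hline : DifferentiableAt ℝ (fun t : ℝ => (x : ℂ) + t * I) 0 := by fun_prop
  have hd' : DifferentiableAt ℝ foldMap ((x : ℂ) + ((0 : ℝ) : ℂ) * I) := by simpa using hd
  have hcomp : DifferentiableAt ℝ (fun t : ℝ => (foldMap ((x : ℂ) + t * I)).im) 0 :=
    imCLM.differentiableAt.comp _ (hd'.comp (f := fun t : ℝ => (x : ℂ) + t * I) 0 hline)
  exact not_differentiableAt_abs_zero (by simpa [foldMap] using hcomp)

lemma HarmonicOnC.differentiableAt {f : ℂ → ℂ} {U : Set ℂ} {z : ℂ} (hf : HarmonicOnC f U)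
    (hU : IsOpen U) (hz : z ∈ U) : DifferentiableAt ℝ f z :=
  (hf.1.differentiableOn (by norm_num)).differentiableAt (hU.mem_nhds hz)

theorem stmt1 (h : ℂ → ℂ)
    (hdef : ∀ z : ℂ, h z = if 0 ≤ z.im then 2 * z + (starRingEnd ℂ) z
        else z + 2 * (starRingEnd ℂ) z) :
    (∃ K : NNReal, LipschitzWith K h) ∧
    (∀ᵐ z : ℂ ∂volume, wz h z * (starRingEnd ℂ) (wzbar h z) = 2) ∧
    (∀ x : ℝ, ∀ U : Set ℂ, IsOpen U → (x : ℂ) ∈ U → ¬ HarmonicOnC h U) := by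
  obtain rfl : h = foldMap := funext fun z => (hdef z).trans (foldMap_eq_ite z).symm
  refine ⟨⟨3, lipschitzWith_foldMap⟩, ?_, fun x U hU hx hharm => ?_⟩
  · filter_upwards [compl_mem_ae_iff.mpr (volume_setOf_im_eq 0)] with z hz
    exact wz_mul_conj_wzbar_foldMap hz
  · exact not_differentiableAt_foldMap_ofReal x (hharm.differentiableAt hU hx)
end

section
/- The map h defined on the annulus {r < |z| < R} (with 0 < r < 1 < R) by h(z) = z/|z| for r < |z| ≤ 1 and h(z) = (1/2)(z + 1/conj(z)) for 1 ≤ |z| < R is continuous, and satisfies h_z · conj(h_{z̄}) = -1/(4z²) almost everywhere on the annulus. -/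
open Complex MeasureTheory Metric Filter
open scoped Real Topology

lemma inner_fderiv (z : ℂ) (hz : z ≠ 0) (v : ℂ) :
    fderiv ℝ (fun w : ℂ => w / (‖w‖ : ℂ)) z v
      = v / ‖z‖ - z * (z.re * v.re + z.im * v.im) / (‖z‖) ^ 3 := by
  have hs : Complex.normSq z ≠ 0 := fun h => hz (Complex.normSq_eq_zero.1 h)
  have hs' : z.re * z.re + z.im * z.im ≠ 0 := by
    simpa [Complex.normSq_apply] using hs
  have A1 : HasFDerivAt (fun w : ℂ => w.re * w.re + w.im * w.im)
      ((z.re • Complex.reCLM + z.re • Complex.reCLM) +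
        (z.im • Complex.imCLM + z.im • Complex.imCLM)) z :=
    (Complex.reCLM.hasFDerivAt.mul Complex.reCLM.hasFDerivAt).add
      (Complex.imCLM.hasFDerivAt.mul Complex.imCLM.hasFDerivAt)
  have A2 := (Real.hasDerivAt_sqrt hs').comp_hasFDerivAt z A1
  have A3 := Complex.ofRealCLM.hasFDerivAt.comp z A2
  have hsqrt : Real.sqrt (z.re * z.re + z.im * z.im) = ‖z‖ := by
    rw [Complex.norm_def, Complex.normSq_apply]
  have ha : (‖z‖ : ℝ) ≠ 0 := norm_ne_zero_iff.mpr hz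
  have haC : ((‖z‖ : ℝ) : ℂ) ≠ 0 := by exact_mod_cast ha
  have hneC : ((Real.sqrt (z.re * z.re + z.im * z.im) : ℝ) : ℂ) ≠ 0 := by
    rw [hsqrt]; exact haC
  have A4 := ((hasDerivAt_inv hneC).hasFDerivAt.restrictScalars ℝ).comp z A3
  have A5 := (hasFDerivAt_id (𝕜 := ℝ) z).mul A4
  have hfun : (fun w : ℂ => w / (‖w‖ : ℂ))
      = fun w : ℂ => w * (((Real.sqrt (w.re * w.re + w.im * w.im) : ℝ) : ℂ))⁻¹ := by
    funext w
    rw [div_eq_mul_inv, Complex.norm_def, Complex.normSq_apply]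
  have A6 : HasFDerivAt
      (fun w : ℂ => w * (((Real.sqrt (w.re * w.re + w.im * w.im) : ℝ) : ℂ))⁻¹) _ z := A5
  rw [hfun, A6.fderiv]
  simp only [ContinuousLinearMap.add_apply, ContinuousLinearMap.smul_apply,
    ContinuousLinearMap.coe_comp', Function.comp_apply, ContinuousLinearMap.coe_restrictScalars',
    ContinuousLinearMap.smulRight_apply, ContinuousLinearMap.one_apply,
    Complex.ofRealCLM_apply, Complex.reCLM_apply, Complex.imCLM_apply,
    ContinuousLinearMap.id_apply, smul_eq_mul, Complex.real_smul, hsqrt,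
    ContinuousLinearMap.toSpanSingleton_apply, id_eq]
  push_cast
  field_simp
  ring

lemma outer_fderiv (z : ℂ) (hz : z ≠ 0) (v : ℂ) :
    fderiv ℝ (fun w : ℂ => (w + ((starRingEnd ℂ) w)⁻¹) / 2) z v
      = (v + -(((starRingEnd ℂ) z) ^ 2)⁻¹ * (starRingEnd ℂ) v) / 2 := by
  have hcz : (starRingEnd ℂ) z ≠ 0 := by simpa using hz
  have B1 : HasFDerivAt (fun w : ℂ => (starRingEnd ℂ) w)
      (Complex.conjCLE.toContinuousLinearMap) z := Complex.conjCLE.hasFDerivAt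
  have B2 := ((hasDerivAt_inv hcz).hasFDerivAt.restrictScalars ℝ).comp z B1
  have B3 : HasFDerivAt (𝕜 := ℝ) (fun w : ℂ => (w + ((starRingEnd ℂ) w)⁻¹) * (2 : ℂ)⁻¹) _ z :=
    ((hasFDerivAt_id (𝕜 := ℝ) z).add B2).mul_const' ((2 : ℂ)⁻¹)
  rw [show (fun w : ℂ => (w + ((starRingEnd ℂ) w)⁻¹) / 2)
      = (fun w : ℂ => (w + ((starRingEnd ℂ) w)⁻¹) * 2⁻¹) from
    funext fun w => div_eq_mul_inv _ _, B3.fderiv]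
  simp [ContinuousLinearMap.smul_apply, Complex.conjCLE_apply]
  ring

theorem stmt5 (r R : ℝ) (hr : 0 < r) (hr1 : r < 1) (hR : 1 < R) (h : ℂ → ℂ)
    (hdef : ∀ z : ℂ, z ≠ 0 → h z =
        if ‖z‖ ≤ 1 then z / (‖z‖ : ℂ)
        else (z + ((starRingEnd ℂ) z)⁻¹) / 2) :
    ContinuousOn h {z : ℂ | r < ‖z‖ ∧ ‖z‖ < R} ∧
    (∀ᵐ z : ℂ ∂volume, (r < ‖z‖ ∧ ‖z‖ < R) →
      wz h z * (starRingEnd ℂ) (wzbar h z) = -1 / (4 * z ^ 2)) := by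
  set S : Set ℂ := {z : ℂ | r < ‖z‖ ∧ ‖z‖ < R} with hS
  have hSne : ∀ z ∈ S, z ≠ 0 := by
    intro z hz h0
    subst h0
    simp only [hS, Set.mem_setOf_eq, map_zero, norm_zero] at hz
    linarith [hz.1]
  constructor
  · -- continuity
    have hF : ContinuousOn (fun z : ℂ =>
        if ‖z‖ ≤ 1 then z / (‖z‖ : ℂ)
        else (z + ((starRingEnd ℂ) z)⁻¹) / 2) S := by
      apply ContinuousOn.if
      · intro a ha
        have hfr : ‖a‖ = 1 := by
          have := frontier_le_subset_eq (f := fun z : ℂ => ‖z‖)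
            (g := fun _ => (1 : ℝ)) continuous_norm continuous_const ha.2
          simpa using this
        have ha0 : a ≠ 0 := hSne a ha.1
        have h1 : a * (starRingEnd ℂ) a = 1 := by
          rw [Complex.mul_conj]
          norm_cast
          rw [← Complex.sq_norm, hfr]; norm_num
        have hconj : ((starRingEnd ℂ) a)⁻¹ = a := inv_eq_of_mul_eq_one_left h1
        simp [hfr, hconj]
      · refine (continuousOn_id.div
          (Complex.continuous_ofReal.comp continuous_norm).continuousOn ?_)
        intro x hx
        have : x ≠ 0 := hSne x hx.1
        simpa using norm_ne_zero_iff.mpr this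
      · refine ContinuousOn.div_const ?_ 2
        refine continuousOn_id.add (ContinuousOn.inv₀ ?_ ?_)
        · exact (Complex.continuous_conj.continuousOn)
        · intro x hx
          simpa using hSne x hx.1
    exact hF.congr fun z hz => hdef z (hSne z hz)
  · -- a.e. identity
    have hsph : volume {z : ℂ | ‖z‖ = 1} = 0 := by
      have : {z : ℂ | ‖z‖ = 1} = Metric.sphere (0 : ℂ) 1 := by
        ext w; simp [Complex.dist_eq]
      rw [this]
      exact Measure.addHaar_sphere volume 0 1
    have hae : ∀ᵐ z : ℂ ∂volume, ‖z‖ ≠ 1 := by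
      rw [MeasureTheory.ae_iff]
      simpa using hsph
    filter_upwards [hae] with z hz1 hzS
    have hz0 : z ≠ 0 := hSne z hzS
    have haC : ((‖z‖ : ℝ) : ℂ) ≠ 0 := by
      exact_mod_cast norm_ne_zero_iff.mpr hz0
    by_cases hlt : ‖z‖ < 1
    · -- inner region
      have hU : IsOpen {w : ℂ | 0 < ‖w‖ ∧ ‖w‖ < 1} :=
        (isOpen_lt continuous_const continuous_norm).inter
          (isOpen_lt continuous_norm continuous_const)
      have hzU : z ∈ {w : ℂ | 0 < ‖w‖ ∧ ‖w‖ < 1} :=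
        ⟨norm_pos_iff.mpr hz0, hlt⟩
      have hEq : h =ᶠ[𝓝 z] fun w => w / (‖w‖ : ℂ) := by
        filter_upwards [hU.mem_nhds hzU] with w hw
        rw [hdef w (norm_ne_zero_iff.1 hw.1.ne'), if_pos hw.2.le]
      have hfd : fderiv ℝ h z = fderiv ℝ (fun w => w / (‖w‖ : ℂ)) z :=
        hEq.fderiv_eq
      have hkey : ((‖z‖ : ℝ) : ℂ) ^ 2 = z * (starRingEnd ℂ) z := by
        rw [Complex.mul_conj]; norm_cast; exact Complex.sq_norm z
      have hconj : (starRingEnd ℂ) z = (z.re : ℂ) - (z.im : ℂ) * Complex.I := by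
        simp [Complex.ext_iff]
      have hkey2 : ((‖z‖ : ℝ) : ℂ) ^ 2 = z * ((z.re : ℂ) - (z.im : ℂ) * Complex.I) := by
        rw [hkey, hconj]
      have hwz : wz h z = 1 / (2 * (‖z‖ : ℂ)) := by
        rw [wz, hfd, inner_fderiv z hz0 1, inner_fderiv z hz0 Complex.I]
        simp only [Complex.one_re, Complex.one_im, Complex.I_re, Complex.I_im]
        field_simp
        linear_combination hkey2 - ((‖z‖ : ℝ) : ℂ) ^ 2 * Complex.I_sq +
          (-z * z.re + z * z.im * Complex.I) * Complex.ofReal_one + (z * z.re * Complex.I - z * z.im) * Complex.ofReal_zero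
      have hwzbar : wzbar h z = -z ^ 2 / (2 * (‖z‖ : ℂ) ^ 3) := by
        rw [wzbar, hfd, inner_fderiv z hz0 1, inner_fderiv z hz0 Complex.I]
        simp only [Complex.one_re, Complex.one_im, Complex.I_re, Complex.I_im]
        field_simp
        linear_combination (-z) * Complex.re_add_im z + ((‖z‖ : ℝ) : ℂ) ^ 2 * Complex.I_sq +
          (-z * z.re - z * z.im * Complex.I) * Complex.ofReal_one + (-z * z.re * Complex.I - z * z.im) * Complex.ofReal_zero
      rw [hwz, hwzbar]
      simp only [map_div₀, map_neg, map_pow, map_mul, map_ofNat, Complex.conj_ofReal]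
      field_simp
      linear_combination ((4:ℂ) *
        (z * (starRingEnd ℂ) z + ((‖z‖ : ℝ) : ℂ) ^ 2)) * hkey
    · -- outer region
      have hgt : 1 < ‖z‖ := lt_of_le_of_ne (not_lt.1 hlt) (Ne.symm hz1)
      have hU : IsOpen {w : ℂ | 1 < ‖w‖} :=
        isOpen_lt continuous_const continuous_norm
      have hEq : h =ᶠ[𝓝 z] fun w => (w + ((starRingEnd ℂ) w)⁻¹) / 2 := by
        filter_upwards [hU.mem_nhds hgt] with w hw
        have hw0 : w ≠ 0 := by
          intro h0; simp [h0] at hw; linarith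
        rw [hdef w hw0, if_neg (not_le.2 hw)]
      have hfd : fderiv ℝ h z
          = fderiv ℝ (fun w => (w + ((starRingEnd ℂ) w)⁻¹) / 2) z := hEq.fderiv_eq
      have hcz : (starRingEnd ℂ) z ≠ 0 := by simpa using hz0
      have hwz : wz h z = 1 / 2 := by
        rw [wz, hfd, outer_fderiv z hz0 1, outer_fderiv z hz0 Complex.I]
        simp only [map_one, Complex.conj_I]
        field_simp
        linear_combination (-(starRingEnd ℂ) z ^ 2 - 1) * Complex.I_sq
      have hwzbar : wzbar h z = -(((starRingEnd ℂ) z) ^ 2)⁻¹ / 2 := by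
        rw [wzbar, hfd, outer_fderiv z hz0 1, outer_fderiv z hz0 Complex.I]
        simp only [map_one, Complex.conj_I]
        field_simp
        linear_combination (1 + (starRingEnd ℂ) z ^ 2) * Complex.I_sq
      rw [hwz, hwzbar]
      simp only [map_div₀, map_neg, map_inv₀, map_pow, map_ofNat, Complex.conj_conj]
      field_simp
      ring
end

section
/- Let f : 𝕋 → ℂ be a W^{1,2} function on the unit circle with Fourier coefficients (c_n)_{n∈ℤ}, so f(e^{iθ}) = Σ c_n e^{inθ}. If max_{𝕋} |f - c₀| ≥ 2 · min_{𝕋} |f - c₀|, then Σ_{n∈ℤ} n·|c_n|² ≤ (99/100) · Σ_{n∈ℤ} n²·|c_n|². -/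
/-!
Let `d` be `c` with the modes `0` and `1` removed and `E = ∑ |d n|`. Then `f - c 0` stays
within `E` of the circle `c 1 e^{iθ}`, so the gap between its maximal and minimal modulus forces
`|c 1| ≤ 3E`. Cauchy–Schwarz against `∑_{n ≠ 0} 1/n² = π²/3` gives `E² ≤ (π²/3) ∑ n² |d n|²`,
and `n² ≤ 2 (n² - n)` for every integer `n ≠ 1` bounds `∑ n² |d n|²` by twice the isoperimetric
deficit `∑ (n² - n) |c n|²`. Hence `∑ n² |c n|² ≤ (6π² + 2) ∑ (n² - n) |c n|²`, and `6π² + 2 < 100`.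
-/

open Real

theorem Real.sq_tsum_mul_le_tsum_sq_mul_tsum_sq {ι : Type*} {f g : ι → ℝ} (hf : ∀ i, 0 ≤ f i)
    (hg : ∀ i, 0 ≤ g i) (hf₂ : Summable fun i => f i ^ 2) (hg₂ : Summable fun i => g i ^ 2) :
    Summable (fun i => f i * g i) ∧
      (∑' i, f i * g i) ^ 2 ≤ (∑' i, f i ^ 2) * ∑' i, g i ^ 2 := by
  simp_rw [← rpow_two] at hf₂ hg₂ ⊢
  obtain ⟨hfg, hle⟩ := summable_and_inner_le_Lp_mul_Lq_tsum_of_nonneg .two_two hf hg hf₂ hg₂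
  refine ⟨hfg, ?_⟩
  have hF : 0 ≤ ∑' i, f i ^ (2 : ℝ) := tsum_nonneg fun i => rpow_nonneg (hf i) _
  have hG : 0 ≤ ∑' i, g i ^ (2 : ℝ) := tsum_nonneg fun i => rpow_nonneg (hg i) _
  calc (∑' i, f i * g i) ^ (2 : ℝ)
      ≤ ((∑' i, f i ^ (2 : ℝ)) ^ (1 / 2 : ℝ) * (∑' i, g i ^ (2 : ℝ)) ^ (1 / 2 : ℝ)) ^ (2 : ℝ) :=
        rpow_le_rpow (tsum_nonneg fun i => mul_nonneg (hf i) (hg i)) hle zero_le_two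
    _ = (∑' i, f i ^ (2 : ℝ)) * ∑' i, g i ^ (2 : ℝ) := by
        rw [mul_rpow (by positivity) (by positivity), ← rpow_mul hF, ← rpow_mul hG]
        norm_num

-- The `n = 0` term is `1 / 0 = 0`.
theorem hasSum_one_div_int_sq : HasSum (fun n : ℤ => 1 / (n : ℝ) ^ 2) (π ^ 2 / 3) := by
  have h := HasSum.of_nat_of_neg (f := fun n : ℤ => 1 / (n : ℝ) ^ 2)
    (by simpa using hasSum_zeta_two) (by simpa using hasSum_zeta_two)
  have hsum : π ^ 2 / 6 + π ^ 2 / 6 - 1 / ((0 : ℤ) : ℝ) ^ 2 = π ^ 2 / 3 := by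
    norm_num
    ring
  exact hsum ▸ h

theorem sq_tsum_norm_le_pi_sq_div_three_mul {E : Type*} [SeminormedAddCommGroup E] {d : ℤ → E}
    (hd₀ : d 0 = 0) (hd : Summable fun n : ℤ => (n : ℝ) ^ 2 * ‖d n‖ ^ 2) :
    Summable (fun n => ‖d n‖) ∧
      (∑' n, ‖d n‖) ^ 2 ≤ π ^ 2 / 3 * ∑' n : ℤ, (n : ℝ) ^ 2 * ‖d n‖ ^ 2 := by
  have hsplit : ∀ n : ℤ, ‖d n‖ = |(n : ℝ)|⁻¹ * (|(n : ℝ)| * ‖d n‖) := by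
    intro n
    rcases eq_or_ne n 0 with rfl | hn
    · simp [hd₀]
    · field_simp
  have hinv : ∀ n : ℤ, (|(n : ℝ)|⁻¹) ^ 2 = 1 / (n : ℝ) ^ 2 := fun n => by simp
  have hmul : ∀ n : ℤ, (|(n : ℝ)| * ‖d n‖) ^ 2 = (n : ℝ) ^ 2 * ‖d n‖ ^ 2 := fun n => by
    rw [mul_pow, sq_abs]
  obtain ⟨hsum, hle⟩ := Real.sq_tsum_mul_le_tsum_sq_mul_tsum_sq (f := fun n : ℤ => |(n : ℝ)|⁻¹)
    (g := fun n => |(n : ℝ)| * ‖d n‖) (fun n => by positivity) (fun n => by positivity)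
    (by simpa only [hinv] using hasSum_one_div_int_sq.summable) (by simpa only [hmul] using hd)
  simp only [← hsplit, hinv, hmul, hasSum_one_div_int_sq.tsum_eq] at hsum hle
  exact ⟨hsum, hle⟩

theorem Summable.tsum_eq_zero_add_one_add_tsum_indicator {M : Type*} [UniformSpace M]
    [AddCommGroup M] [IsUniformAddGroup M] [CompleteSpace M] [T2Space M] {a : ℤ → M}
    (ha : Summable a) :
    ∑' n, a n = a 0 + a 1 + ∑' n, ({0, 1}ᶜ : Set ℤ).indicator a n := by
  rw [← ha.sum_add_tsum_subtype_compl {0, 1}, Finset.sum_pair zero_ne_one,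
    ← tsum_subtype, ← Finset.coe_pair]
  rfl

theorem abs_norm_tsum_mul_exp_sub_norm_le {c : ℤ → ℂ} (hc : Summable fun n => ‖c n‖) (θ : ℝ) :
    |‖∑' n : ℤ, c n * Complex.exp (Complex.I * n * θ) - c 0‖ - ‖c 1‖| ≤
      ∑' n, ‖({0, 1}ᶜ : Set ℤ).indicator c n‖ := by
  have hexp : ∀ n : ℤ, ‖Complex.exp (Complex.I * n * θ)‖ = 1 := fun n => by
    rw [Complex.norm_exp]; simp
  have hterms : Summable fun n : ℤ => c n * Complex.exp (Complex.I * n * θ) :=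
    .of_norm (by simpa [hexp] using hc)
  set R := ∑' n, ({0, 1}ᶜ : Set ℤ).indicator c n * Complex.exp (Complex.I * n * θ)
  have hR : ‖R‖ ≤ ∑' n, ‖({0, 1}ᶜ : Set ℤ).indicator c n‖ := by
    refine (norm_tsum_le_tsum_norm ?_).trans_eq ?_ <;>
      simp only [norm_mul, hexp, mul_one, norm_indicator_eq_indicator_norm]
    exact hc.indicator _
  rw [hterms.tsum_eq_zero_add_one_add_tsum_indicator]
  simp only [Set.indicator_mul_left, Int.cast_zero, mul_zero, zero_mul, Complex.exp_zero, mul_one,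
    Int.cast_one]
  rw [add_assoc, add_sub_cancel_left]
  calc _ = |‖c 1 * Complex.exp (Complex.I * θ) + R‖ - ‖c 1 * Complex.exp (Complex.I * θ)‖| := by
        rw [norm_mul, Complex.norm_exp_I_mul_ofReal, mul_one]
    _ ≤ ‖R‖ := (abs_norm_sub_norm_le _ _).trans_eq (by rw [add_sub_cancel_left])
    _ ≤ _ := hR

theorem le_three_mul_of_two_mul_iInf_le_iSup {ι : Type*} [Nonempty ι] {g : ι → ℝ} {r ε : ℝ}
    (hg : ∀ i, |g i - r| ≤ ε) (hgap : 2 * ⨅ i, g i ≤ ⨆ i, g i) : r ≤ 3 * ε := by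
  have hinf : r - ε ≤ ⨅ i, g i := le_ciInf fun i => by linarith [(abs_le.mp (hg i)).1]
  have hsup : ⨆ i, g i ≤ r + ε := ciSup_le fun i => by linarith [(abs_le.mp (hg i)).2]
  linarith

theorem Int.sq_le_two_mul_sq_sub_self {n : ℤ} (hn : n ≠ 1) :
    (n : ℝ) ^ 2 ≤ 2 * ((n : ℝ) ^ 2 - n) := by
  have h : n ≤ 0 ∨ 2 ≤ n := by omega
  have h' : (n : ℝ) ≤ 0 ∨ 2 ≤ (n : ℝ) := by exact_mod_cast h
  rcases h' with h' | h' <;> nlinarith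

theorem tsum_sq_mul_indicator_le {w : ℤ → ℝ} (hw : ∀ n, 0 ≤ w n)
    (hW : Summable fun n : ℤ => (n : ℝ) ^ 2 * w n) :
    ∑' n : ℤ, ({0, 1}ᶜ : Set ℤ).indicator (fun n : ℤ => (n : ℝ) ^ 2 * w n) n ≤
      2 * (∑' n : ℤ, (n : ℝ) ^ 2 * w n - ∑' n : ℤ, (n : ℝ) * w n) := by
  have hW₁ : Summable fun n : ℤ => (n : ℝ) * w n := by
    refine hW.of_norm_bounded fun n => ?_
    have hn : |(n : ℝ)| ≤ (n : ℝ) ^ 2 := by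
      rw [← Int.cast_abs, ← Int.natCast_natAbs]
      exact_mod_cast Int.natAbs_le_self_sq n
    rw [norm_mul, Real.norm_eq_abs, Real.norm_of_nonneg (hw n)]
    exact mul_le_mul_of_nonneg_right hn (hw n)
  rw [← hW.tsum_sub hW₁, ← tsum_mul_left]
  refine hW.indicator _ |>.tsum_le_tsum (fun n => ?_) ((hW.sub hW₁).mul_left 2)
  by_cases hn : n ∈ ({0, 1}ᶜ : Set ℤ)
  · rw [Set.indicator_of_mem hn, ← sub_mul, ← mul_assoc]
    exact mul_le_mul_of_nonneg_right (Int.sq_le_two_mul_sq_sub_self (by simp_all)) (hw n)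
  · rw [Set.indicator_of_notMem hn]
    obtain rfl | rfl : n = 0 ∨ n = 1 := by
      simpa only [Set.mem_compl_iff, not_not, Set.mem_insert_iff, Set.mem_singleton_iff] using hn
    all_goals simp

theorem stmt6_general (c : ℤ → ℂ) (f : ℝ → ℂ)
    (hW12 : Summable fun n : ℤ => (n : ℝ) ^ 2 * ‖c n‖ ^ 2)
    (hrep : ∀ θ : ℝ, f θ = ∑' n : ℤ, c n * Complex.exp (Complex.I * n * θ))
    (hgap : 2 * (⨅ θ : ℝ, ‖f θ - c 0‖) ≤ ⨆ θ : ℝ, ‖f θ - c 0‖) :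
    ∑' n : ℤ, (n : ℝ) * ‖c n‖ ^ 2 ≤ (99 / 100) * ∑' n : ℤ, (n : ℝ) ^ 2 * ‖c n‖ ^ 2 := by
  set s : Set ℤ := {0, 1}ᶜ
  set B := ∑' n : ℤ, (n : ℝ) ^ 2 * ‖c n‖ ^ 2
  set T := ∑' n, s.indicator (fun n : ℤ => (n : ℝ) ^ 2 * ‖c n‖ ^ 2) n
  set E := ∑' n, ‖s.indicator c n‖
  have hd : ∀ n : ℤ, (n : ℝ) ^ 2 * ‖s.indicator c n‖ ^ 2 =
      s.indicator (fun n : ℤ => (n : ℝ) ^ 2 * ‖c n‖ ^ 2) n := fun n => by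
    by_cases hn : n ∈ s <;> simp [hn]
  obtain ⟨hd_sum, hsobolev⟩ := sq_tsum_norm_le_pi_sq_div_three_mul (d := s.indicator c)
    (by simp [s]) (by simpa only [hd] using hW12.indicator s)
  rw [tsum_congr hd] at hsobolev
  have hc_sum : Summable fun n => ‖c n‖ := (Set.toFinite {0, 1}).summable_compl_iff.mp
    (summable_subtype_iff_indicator.mpr
      (by simpa only [norm_indicator_eq_indicator_norm] using hd_sum))
  have hc₁ : ‖c 1‖ ≤ 3 * E := le_three_mul_of_two_mul_iInf_le_iSup
    (fun θ => hrep θ ▸ abs_norm_tsum_mul_exp_sub_norm_le hc_sum θ) hgap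
  have hB : B = ‖c 1‖ ^ 2 + T := by simpa using hW12.tsum_eq_zero_add_one_add_tsum_indicator
  have hT : T ≤ 2 * (B - ∑' n : ℤ, (n : ℝ) * ‖c n‖ ^ 2) :=
    tsum_sq_mul_indicator_le (fun n => sq_nonneg ‖c n‖) hW12
  have hT₀ : 0 ≤ T := tsum_nonneg fun n => Set.indicator_nonneg (fun n _ => by positivity) n
  have hπ : π ^ 2 ≤ 16 :=
    (pow_le_pow_left₀ pi_pos.le pi_le_four 2).trans_eq (by norm_num)
  have hc₁_sq : ‖c 1‖ ^ 2 ≤ 48 * T := calc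
    ‖c 1‖ ^ 2 ≤ (3 * E) ^ 2 := pow_le_pow_left₀ (norm_nonneg _) hc₁ 2
    _ ≤ 3 * π ^ 2 * T := by linarith
    _ ≤ 48 * T := by nlinarith
  linarith [sq_nonneg ‖c 1‖]

theorem stmt6 (c : ℤ → ℂ) (f : ℝ → ℂ) (hcont : Continuous f)
    (hW12 : Summable fun n : ℤ => (n : ℝ) ^ 2 * ‖c n‖ ^ 2)
    (hrep : ∀ θ : ℝ, f θ = ∑' n : ℤ, c n * Complex.exp (Complex.I * n * θ))
    (hgap : 2 * (⨅ θ : ℝ, ‖f θ - c 0‖) ≤ ⨆ θ : ℝ, ‖f θ - c 0‖) :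
    ∑' n : ℤ, (n : ℝ) * ‖c n‖ ^ 2 ≤ (99 / 100) * ∑' n : ℤ, (n : ℝ) ^ 2 * ‖c n‖ ^ 2 :=
  stmt6_general c f hW12 hrep hgap
end

section
/- Let h ∈ W^{1,2}_loc be a solution of the Hopf–Laplace equation h_z · conj(h_{z̄}) = φ with φ holomorphic on a domain containing the closed disk of radius ρ centered at 0. Then for almost every radius ρ, ∫_{𝕋_ρ} |h_N|² |dz| = ∫_{𝕋_ρ} |h_T|² |dz| = (1/2) ∫_{𝕋_ρ} |Dh|² |dz|, where 𝕋_ρ = {|z| = ρ}. -/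
open Complex MeasureTheory Metric Filter
open scoped Real Topology

/-- Normal derivative h_N = (z h_z + z̄ h_z̄)/|z|. -/
noncomputable def wN (h : ℂ → ℂ) (z : ℂ) : ℂ :=
  (z * wz h z + (starRingEnd ℂ) z * wzbar h z) / ((‖z‖ : ℝ) : ℂ)

/-- Tangential derivative h_T = i(z h_z - z̄ h_z̄)/|z|. -/
noncomputable def wT (h : ℂ → ℂ) (z : ℂ) : ℂ :=
  Complex.I * (z * wz h z - (starRingEnd ℂ) z * wzbar h z) / ((‖z‖ : ℝ) : ℂ)

/-!
On the circle `z = ρ e^{iθ}` one has, pointwise,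
`|h_N|² + |h_T|² = 2 (|h_z|² + |h_z̄|²)` and `|h_N|² - |h_T|² = 4 Re (z² h_z conj h_z̄) / ρ²`.
Where the Hopf–Laplace equation holds, the second right-hand side is `4 Re (z² φ(z)) / ρ²`, and
`∫ z² φ(z) dθ = (1 / i) ∮ z φ(z) dz = 0` by Cauchy's theorem since `z φ(z)` is holomorphic.
Polar coordinates and Tonelli turn the planar hypotheses (the equation almost everywhere, the
energy locally integrable) into the same statements on almost every circle.
-/

open ComplexConjugate Set
open scoped ENNReal

@[fun_prop]
lemma measurable_wz (h : ℂ → ℂ) : Measurable (wz h) := by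
  unfold wz; fun_prop

@[fun_prop]
lemma measurable_wzbar (h : ℂ → ℂ) : Measurable (wzbar h) := by
  unfold wzbar; fun_prop

@[fun_prop]
lemma measurable_wN (h : ℂ → ℂ) : Measurable (wN h) := by
  unfold wN; fun_prop

@[fun_prop]
lemma measurable_wT (h : ℂ → ℂ) : Measurable (wT h) := by
  unfold wT; fun_prop

lemma norm_mul_add_conj_mul_sq (z a b : ℂ) :
    ‖z * a + conj z * b‖ ^ 2 = ‖z‖ ^ 2 * (‖a‖ ^ 2 + ‖b‖ ^ 2) + 2 * (z ^ 2 * (a * conj b)).re := by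
  simp only [← normSq_eq_norm_sq, normSq_add, normSq_conj, map_mul, conj_conj]
  ring_nf

lemma norm_mul_sub_conj_mul_sq (z a b : ℂ) :
    ‖z * a - conj z * b‖ ^ 2 = ‖z‖ ^ 2 * (‖a‖ ^ 2 + ‖b‖ ^ 2) - 2 * (z ^ 2 * (a * conj b)).re := by
  simp only [← normSq_eq_norm_sq, normSq_sub, normSq_conj, map_mul, conj_conj]
  ring_nf

lemma norm_wN_sq (h : ℂ → ℂ) (z : ℂ) :
    ‖wN h z‖ ^ 2 = ‖z * wz h z + conj z * wzbar h z‖ ^ 2 / ‖z‖ ^ 2 := by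
  rw [wN, norm_div, div_pow, norm_real, norm_norm]

lemma norm_wT_sq (h : ℂ → ℂ) (z : ℂ) :
    ‖wT h z‖ ^ 2 = ‖z * wz h z - conj z * wzbar h z‖ ^ 2 / ‖z‖ ^ 2 := by
  rw [wT, norm_div, norm_mul, norm_I, one_mul, div_pow, norm_real, norm_norm]

lemma norm_wN_sq_add_norm_wT_sq (h : ℂ → ℂ) {z : ℂ} (hz : z ≠ 0) :
    ‖wN h z‖ ^ 2 + ‖wT h z‖ ^ 2 = 2 * (‖wz h z‖ ^ 2 + ‖wzbar h z‖ ^ 2) := by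
  rw [norm_wN_sq, norm_wT_sq, norm_mul_add_conj_mul_sq, norm_mul_sub_conj_mul_sq]
  field_simp
  ring

lemma norm_wN_sq_sub_norm_wT_sq (h : ℂ → ℂ) (z : ℂ) :
    ‖wN h z‖ ^ 2 - ‖wT h z‖ ^ 2 = 4 * (z ^ 2 * (wz h z * conj (wzbar h z))).re / ‖z‖ ^ 2 := by
  rw [norm_wN_sq, norm_wT_sq, norm_mul_add_conj_mul_sq, norm_mul_sub_conj_mul_sq]
  ring

lemma Function.Periodic.ae_of_ae_restrict_Ioc {Q : ℝ → Prop} {T : ℝ} (hQ : Function.Periodic Q T)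
    (hT : 0 < T) (t : ℝ) (h : ∀ᵐ θ ∂volume.restrict (Ioc t (t + T)), Q θ) : ∀ᵐ θ, Q θ := by
  rw [ae_iff, Measure.restrict_apply' measurableSet_Ioc] at h
  refine ae_iff.2 ((isAddFundamentalDomain_Ioc hT t).measure_zero_of_invariant _ ?_ h)
  rintro ⟨g, n, rfl⟩
  ext θ
  simp only [mem_vadd_set_iff_neg_vadd_mem, mem_ofPred_eq, AddSubgroup.vadd_def, vadd_eq_add,
    AddSubgroup.coe_neg, neg_add_eq_sub, (hQ.zsmul n).sub_eq]

section Polar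

variable {E : Type*} [NormedAddCommGroup E]

lemma polarCoord_symm_eq_circleMap (p : ℝ × ℝ) :
    Complex.polarCoord.symm p = circleMap 0 p.1 p.2 := by
  rw [Complex.polarCoord_symm_apply, circleMap_zero, exp_mul_I]
  push_cast
  ring

lemma volume_restrict_polarCoord_target :
    volume.restrict polarCoord.target =
      (volume.restrict (Ioi (0 : ℝ))).prod (volume.restrict (Ioo (-π) π)) := by
  rw [Measure.prod_restrict, ← Measure.volume_eq_prod]
  rfl

lemma setLIntegral_polarCoord_target_circleMap (g : ℂ → ℝ≥0∞) :
    ∫⁻ p in polarCoord.target, ENNReal.ofReal p.1 * g (circleMap 0 p.1 p.2) = ∫⁻ z, g z := by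
  simpa only [polarCoord_symm_eq_circleMap, smul_eq_mul] using
    Complex.lintegral_comp_polarCoord_symm g

lemma ae_ae_circleMap_of_ae {P : ℂ → Prop} (hP : ∀ᵐ z, P z) :
    ∀ᵐ ρ ∂volume.restrict (Ioi 0), ∀ᵐ θ, P (circleMap 0 ρ θ) := by
  obtain ⟨M, hPM, hM, hM0⟩ := exists_measurable_superset_of_null (ae_iff.1 hP)
  have hzero : ∫⁻ p in polarCoord.target,
      ENNReal.ofReal p.1 * M.indicator 1 (circleMap 0 p.1 p.2) = 0 := by
    rw [setLIntegral_polarCoord_target_circleMap, lintegral_indicator_one hM, hM0]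
  rw [lintegral_eq_zero_iff (by fun_prop)] at hzero
  have hprod : ∀ᵐ p ∂volume.restrict polarCoord.target, P (circleMap 0 p.1 p.2) := by
    filter_upwards [hzero, ae_restrict_mem polarCoord.open_target.measurableSet] with p hp hpt
    have hρ : ENNReal.ofReal p.1 ≠ 0 := ENNReal.ofReal_ne_zero_iff.2 hpt.1
    by_contra hnot
    simp [hρ, hPM hnot] at hp
  rw [volume_restrict_polarCoord_target] at hprod
  filter_upwards [Measure.ae_ae_of_ae_prod hprod] with ρ hρ
  refine ((periodic_circleMap 0 ρ).comp P).ae_of_ae_restrict_Ioc Real.two_pi_pos (-π) ?_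
  rwa [show -π + 2 * π = π by ring, ← Measure.restrict_congr_set Ioo_ae_eq_Ioc]

lemma ae_circleIntegrable {f : ℂ → E} (hf : StronglyMeasurable f) (hfi : Integrable f) :
    ∀ᵐ ρ ∂volume.restrict (Ioi 0), CircleIntegrable f 0 ρ := by
  have hg : Measurable fun p : ℝ × ℝ => ENNReal.ofReal p.1 * ‖f (circleMap 0 p.1 p.2)‖ₑ := by
    fun_prop
  have hfin := setLIntegral_polarCoord_target_circleMap (‖f ·‖ₑ)
  rw [volume_restrict_polarCoord_target, lintegral_prod _ hg.aemeasurable] at hfin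
  filter_upwards [ae_lt_top hg.lintegral_prod_right' (hfin ▸ hfi.2.ne),
    ae_restrict_mem measurableSet_Ioi] with ρ hρfin hρ
  have hIoo : IntegrableOn (fun θ => f (circleMap 0 ρ θ)) (Ioo (-π) π) := by
    refine ⟨(hf.comp_measurable (measurable_circleMap 0 ρ)).aestronglyMeasurable, ?_⟩
    rw [lintegral_const_mul _ (by fun_prop)] at hρfin
    exact ENNReal.lt_top_of_mul_ne_top_right hρfin.ne (ENNReal.ofReal_ne_zero_iff.2 hρ)
  refine ((periodic_circleMap 0 ρ).comp f).intervalIntegrable Real.two_pi_pos.ne' (t := -π)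
    ?_ _ _
  rwa [show -π + 2 * π = π by ring,
    intervalIntegrable_iff_integrableOn_Ioc_of_le (by linarith [Real.pi_pos]),
    integrableOn_Ioc_iff_integrableOn_Ioo]

lemma ae_circleIntegrable_of_integrableOn_closedBall {f : ℂ → E} (hf : StronglyMeasurable f)
    {R : ℝ} (hfi : IntegrableOn f (closedBall 0 R)) :
    ∀ᵐ ρ ∂volume.restrict (Ioo 0 R), CircleIntegrable f 0 ρ := by
  have hind := ae_circleIntegrable (hf.indicator measurableSet_closedBall)
    ((integrable_indicator_iff measurableSet_closedBall).2 hfi)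
  filter_upwards [ae_restrict_of_ae_restrict_of_subset Ioo_subset_Ioi_self hind,
    ae_restrict_mem measurableSet_Ioo] with ρ hρ hρR
  refine hρ.congr fun θ _ => ?_
  exact indicator_of_mem (closedBall_subset_closedBall hρR.2.le
    (circleMap_mem_closedBall 0 hρR.1.le θ)) f

end Polar

lemma integral_circleMap_sq_mul_eq_zero {φ : ℂ → ℂ} {ρ : ℝ} (hρ : 0 ≤ ρ)
    (hφ : DiffContOnCl ℂ φ (ball 0 ρ)) :
    ∫ θ in 0..2 * π, circleMap 0 ρ θ ^ 2 * φ (circleMap 0 ρ θ) = 0 := by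
  have hcauchy := (differentiable_id.diffContOnCl.smul hφ).circleIntegral_eq_zero hρ
  have hintegrand : ∀ θ : ℝ, deriv (circleMap 0 ρ) θ * (circleMap 0 ρ θ * φ (circleMap 0 ρ θ)) =
      I * (circleMap 0 ρ θ ^ 2 * φ (circleMap 0 ρ θ)) := fun θ => by
    rw [deriv_circleMap]
    ring
  simp only [circleIntegral, id, smul_eq_mul, hintegrand, intervalIntegral.integral_const_mul]
    at hcauchy
  exact (mul_eq_zero.1 hcauchy).resolve_left I_ne_zero

section Circle

variable {h : ℂ → ℂ} {ρ : ℝ}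

lemma circleIntegrable_norm_wN_sq_and_norm_wT_sq (hρ : ρ ≠ 0)
    (hE : CircleIntegrable (fun z => ‖wz h z‖ ^ 2 + ‖wzbar h z‖ ^ 2) 0 ρ) :
    CircleIntegrable (fun z => ‖wN h z‖ ^ 2) 0 ρ ∧
      CircleIntegrable (fun z => ‖wT h z‖ ^ 2) 0 ρ := by
  have hbound : ∀ θ, ‖wN h (circleMap 0 ρ θ)‖ ^ 2 ≤ 2 * (‖wz h (circleMap 0 ρ θ)‖ ^ 2 +
      ‖wzbar h (circleMap 0 ρ θ)‖ ^ 2) ∧ ‖wT h (circleMap 0 ρ θ)‖ ^ 2 ≤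
      2 * (‖wz h (circleMap 0 ρ θ)‖ ^ 2 + ‖wzbar h (circleMap 0 ρ θ)‖ ^ 2) := fun θ => by
    have hsum := norm_wN_sq_add_norm_wT_sq h (z := circleMap 0 ρ θ) (circleMap_ne_center hρ)
    constructor <;> nlinarith
  have h2E := hE.const_mul 2
  exact ⟨h2E.mono_fun' (by fun_prop : Measurable _).aestronglyMeasurable
      (Eventually.of_forall fun θ => by simpa only [norm_pow, norm_norm] using (hbound θ).1),
    h2E.mono_fun' (by fun_prop : Measurable _).aestronglyMeasurable
      (Eventually.of_forall fun θ => by simpa only [norm_pow, norm_norm] using (hbound θ).2)⟩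

lemma integral_norm_wN_sq_add_integral_norm_wT_sq (hρ : ρ ≠ 0)
    (hE : CircleIntegrable (fun z => ‖wz h z‖ ^ 2 + ‖wzbar h z‖ ^ 2) 0 ρ) :
    (∫ θ in 0..2 * π, ‖wN h (circleMap 0 ρ θ)‖ ^ 2) +
        ∫ θ in 0..2 * π, ‖wT h (circleMap 0 ρ θ)‖ ^ 2 =
      ∫ θ in 0..2 * π, 2 * (‖wz h (circleMap 0 ρ θ)‖ ^ 2 + ‖wzbar h (circleMap 0 ρ θ)‖ ^ 2) := by
  obtain ⟨hN, hT⟩ := circleIntegrable_norm_wN_sq_and_norm_wT_sq hρ hE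
  rw [← intervalIntegral.integral_add hN hT]
  exact intervalIntegral.integral_congr fun θ _ =>
    norm_wN_sq_add_norm_wT_sq h (circleMap_ne_center hρ)

lemma integral_norm_wN_sq_eq_integral_norm_wT_sq {φ : ℂ → ℂ} (hρ : 0 < ρ)
    (hφ : DiffContOnCl ℂ φ (ball 0 ρ))
    (hE : CircleIntegrable (fun z => ‖wz h z‖ ^ 2 + ‖wzbar h z‖ ^ 2) 0 ρ)
    (hhopf : ∀ᵐ θ, wz h (circleMap 0 ρ θ) * conj (wzbar h (circleMap 0 ρ θ)) =
      φ (circleMap 0 ρ θ)) :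
    ∫ θ in 0..2 * π, ‖wN h (circleMap 0 ρ θ)‖ ^ 2 =
      ∫ θ in 0..2 * π, ‖wT h (circleMap 0 ρ θ)‖ ^ 2 := by
  obtain ⟨hN, hT⟩ := circleIntegrable_norm_wN_sq_and_norm_wT_sq hρ.ne' hE
  have hq : CircleIntegrable (fun z => z ^ 2 * φ z) 0 ρ :=
    ContinuousOn.circleIntegrable hρ.le
      ((continuousOn_pow 2).mul (hφ.continuousOn_ball.mono sphere_subset_closedBall))
  rw [← sub_eq_zero, ← intervalIntegral.integral_sub hN hT]
  calc ∫ θ in 0..2 * π, (‖wN h (circleMap 0 ρ θ)‖ ^ 2 - ‖wT h (circleMap 0 ρ θ)‖ ^ 2)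
      = ∫ θ in 0..2 * π, 4 / ρ ^ 2 * reCLM (circleMap 0 ρ θ ^ 2 * φ (circleMap 0 ρ θ)) :=
        intervalIntegral.integral_congr_ae (hhopf.mono fun θ hθ _ => by
          rw [norm_wN_sq_sub_norm_wT_sq, hθ, norm_circleMap_zero, sq_abs, reCLM_apply]
          ring)
    _ = 4 / ρ ^ 2 * reCLM (∫ θ in 0..2 * π, circleMap 0 ρ θ ^ 2 * φ (circleMap 0 ρ θ)) := by
        rw [intervalIntegral.integral_const_mul, reCLM.intervalIntegral_comp_comm hq]
    _ = 0 := by rw [integral_circleMap_sq_mul_eq_zero hρ.le hφ, map_zero, mul_zero]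

end Circle

theorem stmt11_general (R : ℝ) (X : Set ℂ)
    (hball : Metric.closedBall 0 R ⊆ X)
    (h φ : ℂ → ℂ) (hφ : DifferentiableOn ℂ φ X)
    (hloc : LocallyIntegrableOn (fun z => ‖wz h z‖ ^ 2 + ‖wzbar h z‖ ^ 2) X volume)
    (hhopf : ∀ᵐ z : ℂ ∂volume, z ∈ X → wz h z * (starRingEnd ℂ) (wzbar h z) = φ z) :
    ∀ᵐ ρ : ℝ ∂(volume.restrict (Set.Ioo (0 : ℝ) R)),
      (∫ θ in (0 : ℝ)..(2 * Real.pi), ‖wN h ((ρ : ℂ) * Complex.exp (θ * Complex.I))‖ ^ 2)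
        = (∫ θ in (0 : ℝ)..(2 * Real.pi), ‖wT h ((ρ : ℂ) * Complex.exp (θ * Complex.I))‖ ^ 2) ∧
      (∫ θ in (0 : ℝ)..(2 * Real.pi), ‖wT h ((ρ : ℂ) * Complex.exp (θ * Complex.I))‖ ^ 2)
        = (1 / 2) * ∫ θ in (0 : ℝ)..(2 * Real.pi),
            2 * (‖wz h ((ρ : ℂ) * Complex.exp (θ * Complex.I))‖ ^ 2
               + ‖wzbar h ((ρ : ℂ) * Complex.exp (θ * Complex.I))‖ ^ 2) := by
  have hE : StronglyMeasurable fun z => ‖wz h z‖ ^ 2 + ‖wzbar h z‖ ^ 2 :=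
    (by fun_prop : Measurable _).stronglyMeasurable
  filter_upwards [ae_restrict_of_ae_restrict_of_subset Ioo_subset_Ioi_self
      (ae_ae_circleMap_of_ae hhopf),
    ae_circleIntegrable_of_integrableOn_closedBall hE
      (hloc.integrableOn_compact_subset hball (isCompact_closedBall 0 R)),
    ae_restrict_mem measurableSet_Ioo] with ρ hhopfρ hEρ hρ
  have hsub : closedBall 0 ρ ⊆ X := (closedBall_subset_closedBall hρ.2.le).trans hball
  have hNT := integral_norm_wN_sq_eq_integral_norm_wT_sq hρ.1 (hφ.diffContOnCl_ball hsub) hEρ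
    (hhopfρ.mono fun θ hθ => hθ (hsub (circleMap_mem_closedBall 0 hρ.1.le θ)))
  have hsum := integral_norm_wN_sq_add_integral_norm_wT_sq hρ.1.ne' hEρ
  simp only [circleMap_zero] at hNT hsum
  constructor <;> linarith

theorem stmt11 (R : ℝ) (hR : 0 < R) (X : Set ℂ) (hX : IsOpen X)
    (hball : Metric.closedBall 0 R ⊆ X)
    (h φ : ℂ → ℂ) (hφ : DifferentiableOn ℂ φ X) (hcont : ContinuousOn h X)
    (hloc : LocallyIntegrableOn (fun z => ‖wz h z‖ ^ 2 + ‖wzbar h z‖ ^ 2) X volume)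
    (hhopf : ∀ᵐ z : ℂ ∂volume, z ∈ X → wz h z * (starRingEnd ℂ) (wzbar h z) = φ z) :
    ∀ᵐ ρ : ℝ ∂(volume.restrict (Set.Ioo (0 : ℝ) R)),
      (∫ θ in (0 : ℝ)..(2 * Real.pi), ‖wN h ((ρ : ℂ) * Complex.exp (θ * Complex.I))‖ ^ 2)
        = (∫ θ in (0 : ℝ)..(2 * Real.pi), ‖wT h ((ρ : ℂ) * Complex.exp (θ * Complex.I))‖ ^ 2) ∧
      (∫ θ in (0 : ℝ)..(2 * Real.pi), ‖wT h ((ρ : ℂ) * Complex.exp (θ * Complex.I))‖ ^ 2)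
        = (1 / 2) * ∫ θ in (0 : ℝ)..(2 * Real.pi),
            2 * (‖wz h ((ρ : ℂ) * Complex.exp (θ * Complex.I))‖ ^ 2
               + ‖wzbar h ((ρ : ℂ) * Complex.exp (θ * Complex.I))‖ ^ 2) :=
  stmt11_general R X hball h φ hφ hloc hhopf
end

section
/- Let 𝕏, 𝕐 be bounded planar domains and h : 𝕏 → 𝕐 a harmonic map (both coordinates harmonic) that is monotone, proper, surjective, with Jacobian J_h ≥ 0 a.e. and J_h not identically zero. Then J_h > 0 everywhere in 𝕏 and h is a local diffeomorphism; combined with monotonicity, h is a (harmonic) diffeomorphism of 𝕏 onto 𝕐. -/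
open Complex MeasureTheory Metric Filter
open scoped Real Topology

/-!
Write `f = h_z` and `g = conj h_z̄`; harmonicity makes both holomorphic, and `J_h = |f|² - |g|²`.
Where `f ≠ 0` the quotient `g / f` has modulus `≤ 1`, so by the maximum principle and the identity
theorem `|g| = |f|` at one such point would force `|g| = |f|` on all of `𝕏`, which `J_h ≢ 0` rules
out. Hence `J_h > 0` off the isolated zeros of `f`, and every fibre of `h` (connected by
monotonicity) has an isolated point, so is a single point: `h` is injective. Finally, a zero `z₁`
of `f` is a zero of `f + g`, and near it `Re h = Re Φ + const` for a primitive `Φ` of `f + g`.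
As `Φ'(z₁) = 0`, `Φ - Φ(z₁) = ρᵏ` with `k ≥ 2` and `ρ` a local coordinate, so `Re h` is constant
along three rays `ρ⁻¹(ℝ₊ d)`; the imaginary part of `h` leaves `Im h(z₁)` along all three, two of
them on the same side, and the intermediate value theorem contradicts injectivity (Lewy).
-/

open Set ComplexConjugate InnerProductSpace

theorem laplacian_eq_lapC {f : ℂ → ℂ} {z : ℂ} (hf : ContDiffAt ℝ 2 f z) :
    Laplacian.laplacian f z = lapC f z := by
  have hd : DifferentiableAt ℝ (fderiv ℝ f) z :=
    (hf.fderiv_right (m := 1) (by norm_num)).differentiableAt (by norm_num)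
  simp only [laplacian_eq_iteratedFDeriv_complexPlane, iteratedFDeriv_two_apply, lapC,
    fderiv_clm_apply hd (differentiableAt_const _)]
  simp

theorem harmonicOnNhd_of_lapC_eq_zero {X : Set ℂ} (hX : IsOpen X) {f : ℂ → ℂ}
    (hf : ContDiffOn ℝ 2 f X) (hΔ : ∀ z ∈ X, lapC f z = 0) : HarmonicOnNhd f X := by
  intro z hz
  refine ⟨hf.contDiffAt (hX.mem_nhds hz), ?_⟩
  filter_upwards [hX.mem_nhds hz] with w hw
  rw [laplacian_eq_lapC (hf.contDiffAt (hX.mem_nhds hw)), hΔ w hw, Pi.zero_apply]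

/-- `2 u_z`, in the form in which Mathlib states that it is holomorphic for harmonic `u`. -/
noncomputable def complexPartial (u : ℂ → ℝ) (z : ℂ) : ℂ := fderiv ℝ u z 1 - I * fderiv ℝ u z I

theorem wz_eq_complexPartial {h : ℂ → ℂ} {z : ℂ} (hd : DifferentiableAt ℝ h z) :
    wz h z = (complexPartial (reCLM ∘ h) z + I * complexPartial (imCLM ∘ h) z) / 2 := by
  rw [complexPartial, complexPartial, (reCLM.hasFDerivAt.comp z hd.hasFDerivAt).fderiv,
    (imCLM.hasFDerivAt.comp z hd.hasFDerivAt).fderiv, wz]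
  simp only [ContinuousLinearMap.comp_apply, reCLM_apply, imCLM_apply]
  conv_lhs => rw [← re_add_im (fderiv ℝ h z 1), ← re_add_im (fderiv ℝ h z I)]
  ring_nf

theorem conj_wzbar_eq_complexPartial {h : ℂ → ℂ} {z : ℂ} (hd : DifferentiableAt ℝ h z) :
    conj (wzbar h z) = (complexPartial (reCLM ∘ h) z - I * complexPartial (imCLM ∘ h) z) / 2 := by
  rw [complexPartial, complexPartial, (reCLM.hasFDerivAt.comp z hd.hasFDerivAt).fderiv,
    (imCLM.hasFDerivAt.comp z hd.hasFDerivAt).fderiv, wzbar]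
  simp only [ContinuousLinearMap.comp_apply, reCLM_apply, imCLM_apply]
  conv_lhs => rw [← re_add_im (fderiv ℝ h z 1), ← re_add_im (fderiv ℝ h z I)]
  simp only [map_div₀, map_add, map_mul, conj_ofReal, conj_I, map_ofNat]
  ring_nf

theorem InnerProductSpace.HarmonicOnNhd.differentiableOn_wz {X : Set ℂ} (hX : IsOpen X)
    {h : ℂ → ℂ} (hh : HarmonicOnNhd h X) : DifferentiableOn ℂ (wz h) X := by
  intro z hz
  have hu := HarmonicAt.differentiableAt_complex_partial ((hh z hz).comp_CLM reCLM)
  have hv := HarmonicAt.differentiableAt_complex_partial ((hh z hz).comp_CLM imCLM)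
  refine (((hu.add (hv.const_mul I)).div_const 2).congr_of_eventuallyEq ?_).differentiableWithinAt
  filter_upwards [hX.mem_nhds hz] with w hw
  exact wz_eq_complexPartial ((hh w hw).1.differentiableAt (by norm_num))

theorem InnerProductSpace.HarmonicOnNhd.differentiableOn_conj_wzbar {X : Set ℂ} (hX : IsOpen X)
    {h : ℂ → ℂ} (hh : HarmonicOnNhd h X) : DifferentiableOn ℂ (fun z => conj (wzbar h z)) X := by
  intro z hz
  have hu := HarmonicAt.differentiableAt_complex_partial ((hh z hz).comp_CLM reCLM)
  have hv := HarmonicAt.differentiableAt_complex_partial ((hh z hz).comp_CLM imCLM)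
  refine (((hu.sub (hv.const_mul I)).div_const 2).congr_of_eventuallyEq ?_).differentiableWithinAt
  filter_upwards [hX.mem_nhds hz] with w hw
  exact conj_wzbar_eq_complexPartial ((hh w hw).1.differentiableAt (by norm_num))

theorem ContinuousLinearMap.apply_eq_mul_add_conj_mul (L : ℂ →L[ℝ] ℂ) (v : ℂ) :
    L v = v * ((L 1 - I * L I) / 2) + conj v * ((L 1 + I * L I) / 2) := by
  have hv : L v = v.re * L 1 + v.im * L I := by
    rw [← real_smul, ← real_smul, ← L.map_smul, ← L.map_smul, ← map_add]
    congr 1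
    simp
  conv_rhs => rw [← re_add_im v]
  rw [hv, map_add, map_mul, conj_ofReal, conj_ofReal, conj_I]
  ring_nf; rw [I_sq]; ring

theorem fderiv_apply_eq_wz_wzbar (h : ℂ → ℂ) (z v : ℂ) :
    fderiv ℝ h z v = v * wz h z + conj v * wzbar h z :=
  (fderiv ℝ h z).apply_eq_mul_add_conj_mul v

theorem re_fderiv_apply (h : ℂ → ℂ) (z v : ℂ) :
    (fderiv ℝ h z v).re = (v * (wz h z + conj (wzbar h z))).re := by
  rw [fderiv_apply_eq_wz_wzbar, mul_add, add_re, add_re, ← conj_re (v * conj _)]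
  simp

theorem injective_fderiv_of_norm_wzbar_lt {h : ℂ → ℂ} {z : ℂ} (hlt : ‖wzbar h z‖ < ‖wz h z‖) :
    Function.Injective (fderiv ℝ h z) := by
  rw [injective_iff_map_eq_zero]
  intro v hv
  by_contra hv0
  rw [fderiv_apply_eq_wz_wzbar, add_eq_zero_iff_eq_neg] at hv
  have := congrArg norm hv
  rw [norm_mul, norm_neg, norm_mul, RCLike.norm_conj] at this
  exact hlt.ne' (mul_left_cancel₀ (norm_ne_zero_iff.mpr hv0) this)

theorem exists_mem_nhds_injOn_of_norm_wzbar_lt {h : ℂ → ℂ} {z : ℂ} (hh : ContDiffAt ℝ 1 h z)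
    (hlt : ‖wzbar h z‖ < ‖wz h z‖) : ∃ U ∈ 𝓝 z, InjOn h U := by
  let L : ℂ ≃L[ℝ] ℂ := (LinearEquiv.ofInjectiveEndo (fderiv ℝ h z).toLinearMap
    (injective_fderiv_of_norm_wzbar_lt hlt)).toContinuousLinearEquiv
  have hL : HasStrictFDerivAt h (L : ℂ →L[ℝ] ℂ) z := by
    have hLeq : (L : ℂ →L[ℝ] ℂ) = fderiv ℝ h z := by ext v; rfl
    exact hLeq ▸ hh.hasStrictFDerivAt one_ne_zero
  exact ⟨_, (hL.toOpenPartialHomeomorph h).open_source.mem_nhds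
    hL.mem_toOpenPartialHomeomorph_source, (hL.toOpenPartialHomeomorph h).injOn⟩

theorem forall_le_of_ae_le {α : Type*} [TopologicalSpace α] [MeasurableSpace α] {μ : Measure α}
    [μ.IsOpenPosMeasure] {X : Set α} (hX : IsOpen X) {F G : α → ℝ} (hF : ContinuousOn F X)
    (hG : ContinuousOn G X) (hFG : ∀ᵐ z ∂μ, z ∈ X → F z ≤ G z) : ∀ z ∈ X, F z ≤ G z := by
  intro z hz
  by_contra hlt
  have hbad : {w | ¬(w ∈ X → F w ≤ G w)} ∈ 𝓝 z := by
    filter_upwards [hX.mem_nhds hz, (hG.continuousAt (hX.mem_nhds hz)).eventually_lt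
      (hF.continuousAt (hX.mem_nhds hz)) (not_le.mp hlt)] with w hwX hw
    exact fun hle => (hle hwX).not_gt hw
  exact (Measure.measure_pos_of_mem_nhds μ hbad).ne' (ae_iff.mp hFG)

section HolomorphicPair

variable {X : Set ℂ} {f g : ℂ → ℂ} {z₀ : ℂ}
  (hX : IsOpen X) (hXc : IsPreconnected X) (hf : DifferentiableOn ℂ f X)
  (hg : DifferentiableOn ℂ g X) (hz₀ : z₀ ∈ X) (hne : ‖g z₀‖ ≠ ‖f z₀‖)
include hX hXc hf hg hz₀ hne

theorem not_eventuallyEq_unit_mul {c : ℂ} (hc : ‖c‖ = 1) {z : ℂ} (hz : z ∈ X) :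
    ¬ g =ᶠ[𝓝 z] fun w => c * f w := by
  intro hloc
  have heq := (hg.analyticOnNhd hX).eqOn_of_preconnected_of_eventuallyEq
    (analyticOnNhd_const.mul (hf.analyticOnNhd hX)) hXc hz hloc hz₀
  simp [heq, hc] at hne

theorem not_eventually_add_eq_zero {z : ℂ} (hz : z ∈ X) : ¬ ∀ᶠ w in 𝓝 z, f w + g w = 0 := by
  intro hloc
  refine not_eventuallyEq_unit_mul hX hXc hf hg hz₀ hne (c := -1) (by simp) hz ?_
  filter_upwards [hloc] with w hw
  linear_combination hw

variable (hle : ∀ z ∈ X, ‖g z‖ ≤ ‖f z‖)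
include hle

theorem not_eventually_eq_zero_of_norm_le {z : ℂ} (hz : z ∈ X) : ¬ ∀ᶠ w in 𝓝 z, f w = 0 := by
  intro hloc
  refine not_eventuallyEq_unit_mul hX hXc hf hg hz₀ hne (c := 1) (by simp) hz ?_
  filter_upwards [hloc, hX.mem_nhds hz] with w hw hwX
  simpa [hw] using hle w hwX

theorem norm_lt_of_norm_le_of_ne_zero {z : ℂ} (hz : z ∈ X) (hfz : f z ≠ 0) : ‖g z‖ < ‖f z‖ := by
  refine (hle z hz).lt_of_ne fun heq => ?_
  have hfne : ∀ᶠ w in 𝓝 z, f w ≠ 0 :=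
    (hf.continuousOn.continuousAt (hX.mem_nhds hz)).eventually_ne hfz
  have hmax : IsLocalMax (norm ∘ fun w => g w / f w) z := by
    filter_upwards [hX.mem_nhds hz] with w hw
    simp only [Function.comp_apply, norm_div, heq, div_self (norm_ne_zero_iff.mpr hfz)]
    exact div_le_one_of_le₀ (hle w hw) (norm_nonneg _)
  have hconst := Complex.eventually_eq_of_isLocalMax_norm (by
    filter_upwards [hX.mem_nhds hz, hfne] with w hw hfw
    exact ((hg.differentiableAt (hX.mem_nhds hw)).div
      (hf.differentiableAt (hX.mem_nhds hw)) hfw)) hmax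
  refine not_eventuallyEq_unit_mul hX hXc hf hg hz₀ hne (c := g z / f z)
    (by rw [norm_div, heq, div_self (norm_ne_zero_iff.mpr hfz)]) hz ?_
  filter_upwards [hconst, hfne] with w hw hfw
  rw [← hw, div_mul_cancel₀ _ hfw]

end HolomorphicPair

theorem IsPreconnected.subset_singleton_of_eventually_notMem {α : Type*} [TopologicalSpace α]
    [T1Space α] {S : Set α} {p : α} (hS : IsPreconnected S) (hp : p ∈ S)
    (hiso : ∀ᶠ w in 𝓝[≠] p, w ∉ S) : S ⊆ {p} := by
  obtain ⟨U, hU, hUo, hpU⟩ := eventually_nhdsWithin_iff.mp hiso |> _root_.eventually_nhds_iff.mp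
  intro q hq
  by_contra hqp
  obtain ⟨w, hwS, hwU, hwp⟩ := hS U {p}ᶜ hUo isOpen_compl_singleton
    (fun w _ => (em (w = p)).imp (fun hwp : w = p => hwp ▸ hpU) id) ⟨p, hp, hpU⟩ ⟨q, hq, hqp⟩
  exact hU w hwU hwp hwS

theorem Set.InjOn.of_isPreconnected_fibers {α β : Type*} [TopologicalSpace α] [T1Space α]
    {X : Set α} {h : α → β} (hconn : ∀ z ∈ X, IsPreconnected {w ∈ X | h w = h z})
    (hiso : ∀ z ∈ X, ∃ p ∈ X, h p = h z ∧ ∀ᶠ w in 𝓝[≠] p, w ∉ {w ∈ X | h w = h z}) :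
    InjOn h X := by
  intro a ha b hb hab
  obtain ⟨p, hpX, hpa, hp⟩ := hiso a ha
  have hsub := (hconn a ha).subset_singleton_of_eventually_notMem ⟨hpX, hpa⟩ hp
  exact (hsub ⟨ha, rfl⟩).trans (hsub ⟨hb, hab.symm⟩).symm

theorem injOn_of_isPreconnected_fibers_of_norm_wzbar_le {X : Set ℂ} (hX : IsOpen X)
    (hXc : IsPreconnected X) {h : ℂ → ℂ} (hh : ContDiffOn ℝ 1 h X)
    (hf : DifferentiableOn ℂ (wz h) X) (hg : DifferentiableOn ℂ (fun z => conj (wzbar h z)) X)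
    {z₀ : ℂ} (hz₀ : z₀ ∈ X) (hne : ‖wzbar h z₀‖ ≠ ‖wz h z₀‖)
    (hle : ∀ z ∈ X, ‖wzbar h z‖ ≤ ‖wz h z‖)
    (hconn : ∀ z ∈ X, IsPreconnected {w ∈ X | h w = h z}) : InjOn h X := by
  have hne' : ‖conj (wzbar h z₀)‖ ≠ ‖wz h z₀‖ := by rwa [RCLike.norm_conj]
  have hle' : ∀ z ∈ X, ‖conj (wzbar h z)‖ ≤ ‖wz h z‖ := by simpa using hle
  refine InjOn.of_isPreconnected_fibers hconn fun a ha => ?_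
  by_cases hregular : ∃ p ∈ X, h p = h a ∧ wz h p ≠ 0
  · obtain ⟨p, hp, hpa, hfp⟩ := hregular
    obtain ⟨U, hU, hUinj⟩ := exists_mem_nhds_injOn_of_norm_wzbar_lt (hh.contDiffAt (hX.mem_nhds hp))
      (by simpa using norm_lt_of_norm_le_of_ne_zero hX hXc hf hg hz₀ hne' hle' hp hfp)
    refine ⟨p, hp, hpa, ?_⟩
    filter_upwards [nhdsWithin_le_nhds hU, self_mem_nhdsWithin] with w hwU hwp hw
    exact hwp (hUinj hwU (mem_of_mem_nhds hU) (hw.2.trans hpa.symm))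
  · push Not at hregular
    have hiso : ∀ᶠ w in 𝓝[≠] a, wz h w ≠ 0 :=
      ((hf.analyticOnNhd hX) a ha).eventually_eq_zero_or_eventually_ne_zero.resolve_left
        (not_eventually_eq_zero_of_norm_le hX hXc hf hg hz₀ hne' hle' ha)
    refine ⟨a, ha, rfl, ?_⟩
    filter_upwards [hiso] with w hw hwa
    exact hw (hregular w hwa.1 hwa.2)

theorem exists_ne_mem_inter_of_isPreconnected {I J : Set ℝ} {t a b : ℝ} (hI : IsPreconnected I)
    (hJ : IsPreconnected J) (htI : t ∈ I) (htJ : t ∈ J) (ha : a ∈ I) (hb : b ∈ J) (hat : a ≠ t)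
    (hbt : b ≠ t) (hab : t < a ↔ t < b) : ∃ c ∈ I ∩ J, c ≠ t := by
  rcases hat.lt_or_gt with hat | hat
  · have hbt : b < t := (le_of_not_gt fun h => hat.not_gt (hab.mpr h)).lt_of_ne hbt
    have hmax : max a b < t := max_lt hat hbt
    exact ⟨max a b, ⟨hI.Icc_subset ha htI ⟨le_max_left _ _, hmax.le⟩,
      hJ.Icc_subset hb htJ ⟨le_max_right _ _, hmax.le⟩⟩, hmax.ne⟩
  · have hbt : t < b := hab.mp hat
    have hmin : t < min a b := lt_min hat hbt
    exact ⟨min a b, ⟨hI.Icc_subset htI ha ⟨hmin.le, min_le_left _ _⟩,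
      hJ.Icc_subset htJ hb ⟨hmin.le, min_le_right _ _⟩⟩, hmin.ne'⟩

theorem exists_ne_mem_image_inter_image {ε t : ℝ} (hε : 0 ≤ ε) {T : Fin 3 → ℝ → ℝ}
    (hT : ∀ j, ContinuousOn (T j) (Icc 0 ε)) (hT0 : ∀ j, T j 0 = t) (hTε : ∀ j, T j ε ≠ t) :
    ∃ i j, i ≠ j ∧ ∃ c ∈ T i '' Icc 0 ε ∩ T j '' Icc 0 ε, c ≠ t := by
  obtain ⟨i, j, hij, hside⟩ := Fintype.exists_ne_map_eq_of_card_lt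
    (fun j => decide (t < T j ε)) (by simp)
  have hconn : ∀ j, IsPreconnected (T j '' Icc 0 ε) := fun j => isPreconnected_Icc.image _ (hT j)
  exact ⟨i, j, hij, exists_ne_mem_inter_of_isPreconnected (hconn i) (hconn j)
    ⟨0, ⟨le_rfl, hε⟩, hT0 i⟩ ⟨0, ⟨le_rfl, hε⟩, hT0 j⟩ ⟨ε, ⟨hε, le_rfl⟩, rfl⟩ ⟨ε, ⟨hε, le_rfl⟩, rfl⟩
    (hTε i) (hTε j) (by simpa using hside)⟩

theorem exists_three_unit_directions_re_pow_eq_zero {k : ℕ} (hk : 2 ≤ k) :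
    ∃ d : Fin 3 → ℂ, Function.Injective d ∧ ∀ j, ‖d j‖ = 1 ∧ (d j ^ k).re = 0 := by
  obtain ⟨ζ, hζ⟩ := IsAlgClosed.exists_pow_nat_eq I (by omega : 0 < k)
  have hω := Complex.isPrimitiveRoot_exp (2 * k) (by omega)
  set ω := exp (2 * π * I / ↑(2 * k))
  have hωk : ω ^ k = -1 := by
    have h1 : (ω ^ k) ^ 2 = 1 := by rw [← pow_mul, mul_comm, hω.pow_eq_one]
    have h2 : ω ^ k ≠ 1 := hω.pow_ne_one_of_pos_of_lt (by omega) (by omega)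
    exact (sq_eq_one_iff.mp h1).resolve_left h2
  have hζ0 : ζ ≠ 0 := by rintro rfl; exact I_ne_zero (by rw [← hζ, zero_pow (by omega)])
  refine ⟨fun j => ζ * ω ^ (j : ℕ), fun i j hij => ?_, fun j => ⟨?_, ?_⟩⟩
  · exact Fin.ext (hω.pow_inj (by omega) (by omega) (mul_left_cancel₀ hζ0 hij))
  · rw [norm_mul, norm_pow, hω.norm'_eq_one (by omega), one_pow, mul_one]
    exact (pow_eq_one_iff_of_nonneg (norm_nonneg ζ) (by omega : k ≠ 0)).mp
      (by rw [← norm_pow, hζ, norm_I])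
  · rw [mul_pow, hζ, ← pow_mul, mul_comm (j : ℕ), pow_mul, hωk]
    rcases neg_one_pow_eq_or ℂ (j : ℕ) with h | h <;> simp [h]

theorem not_injOn_of_re_sub_eq_re_pow {H : ℂ → ℂ} {k : ℕ} (hk : 2 ≤ k) {r : ℝ} (hr : 0 < r)
    (hH : ContinuousOn H (ball 0 r)) (hre : ∀ u ∈ ball 0 r, (H u - H 0).re = (u ^ k).re) :
    ¬ Set.InjOn H (ball 0 r) := by
  intro hinj
  obtain ⟨d, hd_inj, hd⟩ := exists_three_unit_directions_re_pow_eq_zero hk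
  set ε := r / 2
  have hray : ∀ j, ∀ t ∈ Icc 0 ε, (t : ℂ) * d j ∈ ball 0 r := fun j t ht => by
    rw [mem_ball_zero_iff, norm_mul, (hd j).1, mul_one, norm_real, Real.norm_of_nonneg ht.1]
    exact ht.2.trans_lt (half_lt_self hr)
  have hray_re : ∀ j, ∀ t ∈ Icc 0 ε, (H (t * d j)).re = (H 0).re := fun j t ht => by
    have := hre _ (hray j t ht)
    rw [mul_pow, ← ofReal_pow, re_ofReal_mul, (hd j).2, mul_zero, sub_re] at this
    linarith
  set T : Fin 3 → ℝ → ℝ := fun j t => (H (t * d j)).im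
  have hT0 : ∀ j, T j 0 = (H 0).im := fun j => by simp [T]
  have hT_eq : ∀ i j, ∀ s ∈ Icc 0 ε, ∀ t ∈ Icc 0 ε, T i s = T j t → (s : ℂ) * d i = t * d j :=
    fun i j s hs t ht hst => hinj (hray i s hs) (hray j t ht)
      (Complex.ext ((hray_re i s hs).trans (hray_re j t ht).symm) hst)
  have hTε : ∀ j, T j ε ≠ (H 0).im := fun j hj => by
    have := hT_eq j j ε ⟨by positivity, le_rfl⟩ 0 ⟨le_rfl, by positivity⟩ (hj.trans (hT0 j).symm)
    have hdj : d j ≠ 0 := norm_ne_zero_iff.mp (by simp [(hd j).1])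
    simp [ε, hr.ne', hdj] at this
  have hinter : ∀ i j, i ≠ j → ∀ c ∈ T i '' Icc 0 ε ∩ T j '' Icc 0 ε, c = (H 0).im := by
    rintro i j hij c ⟨⟨s, hs, rfl⟩, ⟨t, ht, hts⟩⟩
    have hst := hT_eq i j s hs t ht hts.symm
    have hst' : s = t := by
      simpa [(hd i).1, (hd j).1, abs_of_nonneg hs.1, abs_of_nonneg ht.1] using congrArg norm hst
    subst hst'
    rcases eq_or_ne s 0 with rfl | hs0
    · exact hT0 i
    · exact absurd (hd_inj (mul_left_cancel₀ (ofReal_ne_zero.mpr hs0) hst)) hij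
  obtain ⟨i, j, hij, c, hc, hct⟩ := exists_ne_mem_image_inter_image (by positivity)
    (fun j => continuous_im.comp_continuousOn <| hH.comp (by fun_prop) fun t ht => hray j t ht)
    hT0 hTε
  exact hct (hinter i j hij c hc)

theorem AnalyticAt.exists_eventually_pow_eq {g : ℂ → ℂ} {z : ℂ} (hg : AnalyticAt ℂ g z)
    (hgz : g z ≠ 0) {k : ℕ} (hk : k ≠ 0) :
    ∃ q : ℂ → ℂ, AnalyticAt ℂ q z ∧ ∀ᶠ w in 𝓝 z, q w ^ k = g w := by
  obtain ⟨c, hc⟩ := IsAlgClosed.exists_pow_nat_eq (g z) (Nat.pos_of_ne_zero hk)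
  have hslit : g z / g z ∈ slitPlane := by rw [div_self hgz]; exact one_mem_slitPlane
  refine ⟨fun w => c * Complex.exp (Complex.log (g w / g z) / k),
    analyticAt_const.mul ((hg.div_const.clog hslit).div_const.cexp'), ?_⟩
  filter_upwards [hg.continuousAt.eventually_ne hgz] with w hw
  rw [mul_pow, ← exp_nat_mul, mul_div_cancel₀ _ (Nat.cast_ne_zero.mpr hk),
    exp_log (div_ne_zero hw hgz), hc, mul_div_cancel₀ _ hgz]

theorem AnalyticAt.exists_eventuallyEq_pow {Ψ : ℂ → ℂ} {z : ℂ} {k : ℕ} (hΨ : AnalyticAt ℂ Ψ z)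
    (hord : analyticOrderAt Ψ z = k) (hk : k ≠ 0) :
    ∃ ρ : ℂ → ℂ, AnalyticAt ℂ ρ z ∧ ρ z = 0 ∧ deriv ρ z ≠ 0 ∧ ∀ᶠ w in 𝓝 z, Ψ w = ρ w ^ k := by
  obtain ⟨g, hg, hgz, hΨg⟩ := hΨ.analyticOrderAt_eq_natCast.mp hord
  obtain ⟨q, hq, hqg⟩ := hg.exists_eventually_pow_eq hgz hk
  have hqz : q z ≠ 0 := by
    intro h0
    exact hgz (by rw [← hqg.self_of_nhds, h0, zero_pow hk])
  have hρ : HasDerivAt (fun w => (w - z) * q w) (q z) z := by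
    simpa using ((hasDerivAt_id z).sub_const z).fun_mul hq.differentiableAt.hasDerivAt
  refine ⟨fun w => (w - z) * q w, (analyticAt_id.sub analyticAt_const).mul hq, by simp,
    by rwa [hρ.deriv], ?_⟩
  filter_upwards [hΨg, hqg] with w hw hqw
  rw [hw, mul_pow, hqw, smul_eq_mul]

theorem AnalyticAt.exists_two_le_analyticOrderAt_sub {𝕜 E : Type*} [NontriviallyNormedField 𝕜]
    [CharZero 𝕜] [NormedAddCommGroup E] [NormedSpace 𝕜 E] [CompleteSpace E] {Φ : 𝕜 → E} {z : 𝕜}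
    (hΦ : AnalyticAt 𝕜 Φ z) (hΦc : ¬ ∀ᶠ w in 𝓝 z, Φ w = Φ z) (hd : deriv Φ z = 0) :
    ∃ k : ℕ, 2 ≤ k ∧ analyticOrderAt (fun w => Φ w - Φ z) z = k := by
  have hsum := hΦ.analyticOrderAt_deriv_add_one
  have hpos : analyticOrderAt (deriv Φ) z ≠ 0 := analyticOrderAt_ne_zero.mpr ⟨hΦ.deriv, hd⟩
  have htop : analyticOrderAt (fun w => Φ w - Φ z) z ≠ ⊤ := by
    simpa [analyticOrderAt_eq_top, sub_eq_zero] using hΦc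
  rw [← hsum] at htop ⊢
  generalize analyticOrderAt (deriv Φ) z = m at hpos htop
  induction m using ENat.recTopCoe with
  | top => simp at htop
  | coe m => exact ⟨m + 1, by norm_cast at hpos; omega, by norm_cast⟩

theorem deriv_ne_zero_of_injOn_of_re_sub_eq {h Φ : ℂ → ℂ} {z : ℂ} {U : Set ℂ} (hU : U ∈ 𝓝 z)
    (hh : ∀ᶠ w in 𝓝 z, ContinuousAt h w) (hinj : InjOn h U) (hΦ : AnalyticAt ℂ Φ z)
    (hΦc : ¬ ∀ᶠ w in 𝓝 z, Φ w = Φ z) (hre : ∀ᶠ w in 𝓝 z, (h w - h z).re = (Φ w - Φ z).re) :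
    deriv Φ z ≠ 0 := by
  intro hd
  obtain ⟨k, hk2, hk⟩ := hΦ.exists_two_le_analyticOrderAt_sub hΦc hd
  obtain ⟨ρ, hρ, hρz, hρ', hΨρ⟩ :=
    (hΦ.sub analyticAt_const).exists_eventuallyEq_pow hk (by omega)
  set s := hρ.hasStrictDerivAt.localInverse ρ (deriv ρ z) z hρ'
  have hs : AnalyticAt ℂ s 0 := hρz ▸ hρ.analyticAt_localInverse hρ'
  have hs0 : s 0 = z := hρz ▸ HasStrictFDerivAt.localInverse_apply_image ..
  have hright : ∀ᶠ u in 𝓝 0, ρ (s u) = u := hρz ▸ HasStrictDerivAt.eventually_right_inverse ..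
  have hlim : Tendsto s (𝓝 0) (𝓝 z) := hs0 ▸ hs.continuousAt.tendsto
  obtain ⟨r, hr, hball⟩ := Metric.eventually_nhds_iff_ball.mp <| hright.and <|
    hs.eventually_analyticAt.and <| hlim.eventually <| hh.and <|
    (eventually_mem_set.mpr hU).and <| hre.and hΨρ
  refine not_injOn_of_re_sub_eq_re_pow (H := h ∘ s) hk2 hr
    (fun u hu => ((hball u hu).2.2.1.comp (hball u hu).2.1.continuousAt).continuousWithinAt)
    (fun u hu => ?_) (fun u hu u' hu' hss => ?_)
  · obtain ⟨hρs, -, -, -, hre', hΨ'⟩ := hball u hu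
    rw [Pi.sub_apply, hρs] at hΨ'
    rw [Function.comp_apply, Function.comp_apply, hs0, hre', hΨ']
  · obtain ⟨hρu, -, -, hu, -⟩ := hball u hu
    obtain ⟨hρu', -, -, hu', -⟩ := hball u' hu'
    rw [← hρu, ← hρu', hinj hu hu' hss]

theorem exists_re_eq_re_add_of_hasDerivAt {U : Set ℂ} (hU : IsOpen U) (hUc : IsPreconnected U)
    {h Φ : ℂ → ℂ} (hh : ∀ z ∈ U, DifferentiableAt ℝ h z)
    (hΦ : ∀ z ∈ U, HasDerivAt Φ (wz h z + conj (wzbar h z)) z) :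
    ∃ a : ℝ, ∀ z ∈ U, (h z).re = (Φ z).re + a := by
  have hdh : ∀ z ∈ U, HasFDerivAt (fun w => (h w).re) (reCLM.comp (fderiv ℝ h z)) z :=
    fun z hz => reCLM.hasFDerivAt.comp z (hh z hz).hasFDerivAt
  have hdΦ : ∀ z ∈ U, HasFDerivAt (fun w => (Φ w).re)
      (reCLM.comp (((1 : ℂ →L[ℂ] ℂ).smulRight (wz h z + conj (wzbar h z))).restrictScalars ℝ)) z :=
    fun z hz => reCLM.hasFDerivAt.comp z ((hΦ z hz).hasFDerivAt.restrictScalars ℝ)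
  refine hU.exists_eq_add_of_fderiv_eq (𝕜 := ℝ) hUc
    (fun z hz => (hdh z hz).differentiableAt.differentiableWithinAt)
    (fun z hz => (hdΦ z hz).differentiableAt.differentiableWithinAt) fun z hz => ?_
  rw [(hdh z hz).fderiv, (hdΦ z hz).fderiv]
  ext1 v
  simp [re_fderiv_apply]

theorem wz_add_conj_wzbar_ne_zero_of_injOn {X : Set ℂ} (hX : IsOpen X) {h : ℂ → ℂ}
    (hh : ContDiffOn ℝ 1 h X) (hφ : DifferentiableOn ℂ (fun w => wz h w + conj (wzbar h w)) X)
    (hinj : InjOn h X) {z : ℂ} (hz : z ∈ X)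
    (hnt : ¬ ∀ᶠ w in 𝓝 z, wz h w + conj (wzbar h w) = 0) : wz h z + conj (wzbar h z) ≠ 0 := by
  obtain ⟨R, hR, hRX⟩ := Metric.isOpen_iff.mp hX z hz
  obtain ⟨Φ, hΦ⟩ : ∃ Φ : ℂ → ℂ, ∀ w ∈ ball z R, HasDerivAt Φ (wz h w + conj (wzbar h w)) w :=
    (hφ.mono hRX).isExactOn_ball
  have hB : ball z R ∈ 𝓝 z := ball_mem_nhds z hR
  obtain ⟨a, ha⟩ := exists_re_eq_re_add_of_hasDerivAt isOpen_ball (convex_ball z R).isPreconnected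
    (fun w hw => (hh.contDiffAt (hX.mem_nhds (hRX hw))).differentiableAt one_ne_zero) hΦ
  have hre : ∀ᶠ w in 𝓝 z, (h w - h z).re = (Φ w - Φ z).re := by
    filter_upwards [hB] with w hw
    rw [sub_re, sub_re, ha w hw, ha z (mem_ball_self hR)]
    ring
  have hΦc : ¬ ∀ᶠ w in 𝓝 z, Φ w = Φ z := fun hc => hnt <| by
    filter_upwards [hc.eventually_nhds, hB] with w hw hwB
    exact (hΦ w hwB).deriv.symm.trans
      ((Filter.EventuallyEq.deriv_eq (f := fun _ => Φ z) hw).trans (deriv_const w _))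
  have hΦa : AnalyticAt ℂ Φ z := DifferentiableOn.analyticAt
    (fun w hw => (hΦ w hw).differentiableAt.differentiableWithinAt) hB
  rw [← (hΦ z (mem_ball_self hR)).deriv]
  exact deriv_ne_zero_of_injOn_of_re_sub_eq (hX.mem_nhds hz)
    (eventually_of_mem (hX.mem_nhds hz) fun w hw => hh.continuousOn.continuousAt (hX.mem_nhds hw))
    hinj hΦa hΦc hre

theorem stmt14_general (X Y : Set ℂ) (hX : IsOpen X) (hXc : IsConnected X)
    (h : ℂ → ℂ)
    (hsm : ContDiffOn ℝ 2 h X)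
    (hharm : ∀ z ∈ X, lapC h z = 0)
    (hmono : ∀ y ∈ Y, IsCompact {z ∈ X | h z = y} ∧ IsConnected {z ∈ X | h z = y})
    (hsurj : h '' X = Y)
    (hjac : ∀ᵐ z : ℂ ∂volume, z ∈ X → ‖wzbar h z‖ ≤ ‖wz h z‖)
    (hnz : ∃ z ∈ X, ‖wzbar h z‖ ≠ ‖wz h z‖) :
    (∀ z ∈ X, ‖wzbar h z‖ < ‖wz h z‖) ∧
    Set.BijOn h X Y ∧
    (∀ z ∈ X, ∃ U : Set ℂ, IsOpen U ∧ z ∈ U ∧ U ⊆ X ∧ Set.InjOn h U) := by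
  have hharmonic := harmonicOnNhd_of_lapC_eq_zero hX hsm hharm
  have hf := hharmonic.differentiableOn_wz hX
  have hg := hharmonic.differentiableOn_conj_wzbar hX
  have hC1 : ContDiffOn ℝ 1 h X := hsm.of_le (by norm_num)
  obtain ⟨z₀, hz₀, hne⟩ := hnz
  have hle : ∀ z ∈ X, ‖wzbar h z‖ ≤ ‖wz h z‖ :=
    forall_le_of_ae_le hX (by simpa using hg.continuousOn.norm) hf.continuousOn.norm hjac
  have hmaps : MapsTo h X Y := hsurj ▸ mapsTo_image h X
  have hinj : InjOn h X := injOn_of_isPreconnected_fibers_of_norm_wzbar_le hX hXc.isPreconnected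
    hC1 hf hg hz₀ hne hle fun z hz => (hmono (h z) (hmaps hz)).2.isPreconnected
  have hcrit : ∀ z ∈ X, wz h z ≠ 0 := fun z hz hfz => by
    have hgz : wzbar h z = 0 := norm_le_zero_iff.mp (by simpa [hfz] using hle z hz)
    refine wz_add_conj_wzbar_ne_zero_of_injOn hX hC1 (hf.add hg) hinj hz ?_ (by simp [hfz, hgz])
    exact not_eventually_add_eq_zero hX hXc.isPreconnected hf hg hz₀ (by rwa [RCLike.norm_conj]) hz
  refine ⟨fun z hz => ?_, ⟨hmaps, hinj, hsurj ▸ surjOn_image h X⟩,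
    fun z hz => ⟨X, hX, hz, subset_rfl, hinj⟩⟩
  simpa using norm_lt_of_norm_le_of_ne_zero hX hXc.isPreconnected hf hg hz₀
    (by rwa [RCLike.norm_conj]) (by simpa using hle) hz (hcrit z hz)

theorem stmt14 (X Y : Set ℂ) (hX : IsOpen X) (hXc : IsConnected X)
    (hXb : Bornology.IsBounded X)
    (hY : IsOpen Y) (hYc : IsConnected Y) (hYb : Bornology.IsBounded Y)
    (h : ℂ → ℂ)
    (hsm : ContDiffOn ℝ 2 h X)
    (hharm : ∀ z ∈ X, lapC h z = 0)
    (hmono : ∀ y ∈ Y, IsCompact {z ∈ X | h z = y} ∧ IsConnected {z ∈ X | h z = y})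
    (hproper : ∀ K ⊆ Y, IsCompact K → IsCompact {z ∈ X | h z ∈ K})
    (hsurj : h '' X = Y)
    (hjac : ∀ᵐ z : ℂ ∂volume, z ∈ X → ‖wzbar h z‖ ≤ ‖wz h z‖)
    (hnz : ∃ z ∈ X, ‖wzbar h z‖ ≠ ‖wz h z‖) :
    (∀ z ∈ X, ‖wzbar h z‖ < ‖wz h z‖) ∧
    Set.BijOn h X Y ∧
    (∀ z ∈ X, ∃ U : Set ℂ, IsOpen U ∧ z ∈ U ∧ U ⊆ X ∧ Set.InjOn h U) :=
  stmt14_general X Y hX hXc h hsm hharm hmono hsurj hjac hnz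
end

section
/- Let u be a real-valued function harmonic on an open disk D ⊂ ℂ and continuous up to a boundary point z₀ ∈ ∂D, with u(z₀) > u(ζ) for all ζ ∈ D. If u is differentiable at z₀ (as a function on a neighborhood of the closed disk), then the inner normal derivative of u at z₀ is strictly negative; in particular ∇u(z₀) ≠ 0. -/
open Complex MeasureTheory Metric Filter
open scoped Real Topology

/-- Laplacian of a real-valued function on the plane. -/
noncomputable def lapR (u : ℂ → ℝ) (z : ℂ) : ℝ :=
  fderiv ℝ (fun w => fderiv ℝ u w 1) z 1 + fderiv ℝ (fun w => fderiv ℝ u w Complex.I) z Complex.I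

/-!
Hopf's barrier argument. The disk of radius `r / 2` centred at the midpoint `p` of `c` and `z₀`
lies in `D ∪ {z₀}` and touches `∂D` at `z₀`. On the annulus `ρ / 2 ≤ ‖z - p‖ ≤ ρ` (`ρ = r / 2`)
the function `w = u + δ exp (-α ‖z - p‖²)` with `α = 8 / ρ²` has positive Laplacian, so its maximum
lies on one of the two boundary circles; taking for `δ` the gap between `u z₀` and the maximum of
`u` on the inner circle gives `w ≤ w z₀` on the annulus. Hence the derivative of `w` at `z₀` in the
inward direction `p - z₀` is `≤ 0`, while the barrier contributes a strictly positive amount to it.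
-/

open Set
open scoped RealInnerProductSpace

theorem IsLocalMax.deriv_deriv_nonpos {f : ℝ → ℝ} {a : ℝ} (h : IsLocalMax f a)
    (hc : ContinuousAt f a) : deriv (deriv f) a ≤ 0 := by
  by_contra! hpos
  -- the second derivative test makes `a` a local minimum as well, so `f` is locally constant
  have hconst : f =ᶠ[𝓝 a] fun _ => f a :=
    ((isLocalMin_of_deriv_deriv_pos hpos h.deriv_eq_zero hc).and h).mono
      fun _ ht => le_antisymm ht.2 ht.1
  have := hconst.deriv.deriv_eq
  simp only [deriv_const'] at this
  linarith

section Directional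

variable {E F : Type*} [NormedAddCommGroup E] [NormedSpace ℝ E]
  [NormedAddCommGroup F] [NormedSpace ℝ F]

theorem HasFDerivAt.hasDerivAt_comp_add_smul {f : E → F} {f' : E →L[ℝ] F} {x v : E} {t : ℝ}
    (hf : HasFDerivAt f f' (x + t • v)) : HasDerivAt (fun s : ℝ => f (x + s • v)) (f' v) t := by
  have := hf.comp_hasDerivAt t (((hasDerivAt_id t).smul_const v).const_add x)
  simpa [Function.comp_def] using this

theorem ContDiffAt.differentiableAt_fderiv_apply {f : E → F} {x : E} (hf : ContDiffAt ℝ 2 f x)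
    (v : E) : DifferentiableAt ℝ (fun y => fderiv ℝ f y v) x :=
  ((hf.fderiv_right (m := 1) (by norm_num)).differentiableAt (by norm_num)).clm_apply
    (differentiableAt_const v)

theorem IsLocalMax.fderiv_fderiv_apply_nonpos {f : E → ℝ} {x : E} (h : IsLocalMax f x)
    (hf : ContDiffAt ℝ 2 f x) (v : E) : fderiv ℝ (fun y => fderiv ℝ f y v) x v ≤ 0 := by
  have hcont : Continuous fun t : ℝ => x + t • v := by fun_prop
  have hline : Tendsto (fun t : ℝ => x + t • v) (𝓝 0) (𝓝 x) := hcont.tendsto' 0 x (by simp)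
  have hderiv : deriv (fun t : ℝ => f (x + t • v)) =ᶠ[𝓝 0] fun t => fderiv ℝ f (x + t • v) v := by
    filter_upwards [hline.eventually (hf.eventually (by simp))] with t ht
    exact ((ht.differentiableAt (by norm_num)).hasFDerivAt.hasDerivAt_comp_add_smul).deriv
  have hsecond : HasDerivAt (fun t : ℝ => fderiv ℝ f (x + t • v) v)
      (fderiv ℝ (fun y => fderiv ℝ f y v) x v) 0 :=
    HasFDerivAt.hasDerivAt_comp_add_smul (f := fun y => fderiv ℝ f y v)
      (by simpa using (hf.differentiableAt_fderiv_apply v).hasFDerivAt)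
  rw [← (hsecond.congr_of_eventuallyEq hderiv).deriv]
  refine IsLocalMax.deriv_deriv_nonpos ?_ ?_
  · simpa [IsLocalMax, IsMaxFilter] using hline.eventually h
  · exact hf.continuousAt.comp_of_eq hcont.continuousAt (by simp)

end Directional

theorem lapR_add {u v : ℂ → ℝ} {z : ℂ} (hu : ContDiffAt ℝ 2 u z) (hv : ContDiffAt ℝ 2 v z) :
    lapR (u + v) z = lapR u z + lapR v z := by
  have key (e : ℂ) : fderiv ℝ (fun w => fderiv ℝ (u + v) w e) z e
      = fderiv ℝ (fun w => fderiv ℝ u w e) z e + fderiv ℝ (fun w => fderiv ℝ v w e) z e := by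
    have hsum : (fun w => fderiv ℝ (u + v) w e)
        =ᶠ[𝓝 z] (fun w => fderiv ℝ u w e) + (fun w => fderiv ℝ v w e) := by
      filter_upwards [hu.eventually (by simp), hv.eventually (by simp)] with w hu' hv'
      simp [fderiv_add (hu'.differentiableAt (by norm_num)) (hv'.differentiableAt (by norm_num))]
    rw [hsum.fderiv_eq, fderiv_add (hu.differentiableAt_fderiv_apply e)
      (hv.differentiableAt_fderiv_apply e)]
    rfl
  simp only [lapR, key]
  ring

theorem lapR_const_smul (a : ℝ) (u : ℂ → ℝ) (z : ℂ) : lapR (a • u) z = a * lapR u z := by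
  have key (e : ℂ) : fderiv ℝ (fun w => fderiv ℝ (a • u) w e) z e
      = a * fderiv ℝ (fun w => fderiv ℝ u w e) z e := by
    rw [fderiv_const_smul_field]
    exact congrArg (· e)
      (congrFun (fderiv_const_smul_field (𝕜 := ℝ) a (f := fun w => fderiv ℝ u w e)) z)
  simp only [lapR, key]
  ring

section Gaussian

variable {E : Type*} [NormedAddCommGroup E]

noncomputable def radialGaussian (α : ℝ) (p z : E) : ℝ := Real.exp (-α * ‖z - p‖ ^ 2)

theorem radialGaussian_pos (α : ℝ) (p z : E) : 0 < radialGaussian α p z := Real.exp_pos _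

theorem radialGaussian_le_one {α : ℝ} (hα : 0 ≤ α) (p z : E) : radialGaussian α p z ≤ 1 :=
  Real.exp_le_one_iff.mpr (by nlinarith [sq_nonneg ‖z - p‖])

variable [InnerProductSpace ℝ E]

theorem contDiff_radialGaussian (α : ℝ) (p : E) : ContDiff ℝ 2 (radialGaussian α p) :=
  (contDiff_const.mul ((contDiff_norm_sq ℝ).comp (contDiff_id.sub contDiff_const))).exp

theorem hasFDerivAt_radialGaussian (α : ℝ) (p z : E) :
    HasFDerivAt (radialGaussian α p)
      ((-2 * α * radialGaussian α p z) • innerSL ℝ (z - p)) z := by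
  have := (((hasFDerivAt_id z).sub_const p).norm_sq.const_mul (-α)).exp
  refine this.congr_fderiv ?_
  ext v
  simp only [radialGaussian, id_eq, ContinuousLinearMap.comp_id, smul_apply, coe_innerSL_apply,
    nsmul_eq_mul, smul_eq_mul]
  ring

theorem fderiv_radialGaussian_apply (α : ℝ) (p z v : E) :
    fderiv ℝ (radialGaussian α p) z v = -2 * α * ⟪z - p, v⟫ * radialGaussian α p z := by
  rw [(hasFDerivAt_radialGaussian α p z).fderiv, smul_apply, coe_innerSL_apply, smul_eq_mul]
  ring

theorem fderiv_fderiv_radialGaussian_apply (α : ℝ) (p z v : E) :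
    fderiv ℝ (fun y => fderiv ℝ (radialGaussian α p) y v) z v
      = (4 * α ^ 2 * ⟪z - p, v⟫ ^ 2 - 2 * α * ‖v‖ ^ 2) * radialGaussian α p z := by
  simp only [fderiv_radialGaussian_apply]
  have hinner : HasFDerivAt (fun y => -2 * α * ⟪y - p, v⟫) ((-2 * α) • (innerSL ℝ v)) z := by
    simpa [inner_sub_left, real_inner_comm] using
      (((innerSL ℝ v).hasFDerivAt (x := z)).sub_const ⟪p, v⟫).const_mul (-2 * α)
  rw [(hinner.fun_mul (hasFDerivAt_radialGaussian α p z)).fderiv]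
  simp only [add_apply, smul_apply, coe_innerSL_apply, smul_eq_mul, real_inner_self_eq_norm_sq]
  ring

end Gaussian

theorem lapR_radialGaussian (α : ℝ) (p z : ℂ) :
    lapR (radialGaussian α p) z = 4 * α * (α * ‖z - p‖ ^ 2 - 1) * radialGaussian α p z := by
  simp only [lapR, fderiv_fderiv_radialGaussian_apply]
  have : ⟪z - p, 1⟫ ^ 2 + ⟪z - p, I⟫ ^ 2 = ‖z - p‖ ^ 2 := by
    simp only [Complex.inner, Complex.sq_norm, normSq_apply, map_sub, one_mul, mul_re, sub_re,
      sub_im, conj_re, conj_im, I_re, I_im]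
    ring
  simp only [norm_one, Complex.norm_I]
  linear_combination (4 * α ^ 2 * radialGaussian α p z) * this

theorem IsLocalMax.lapR_nonpos {u : ℂ → ℝ} {z : ℂ} (h : IsLocalMax u z)
    (hu : ContDiffAt ℝ 2 u z) : lapR u z ≤ 0 :=
  add_nonpos (h.fderiv_fderiv_apply_nonpos hu 1) (h.fderiv_fderiv_apply_nonpos hu I)

theorem IsCompact.exists_isMaxOn_mem_diff_of_lapR_pos {w : ℂ → ℝ} {K U : Set ℂ}
    (hK : IsCompact K) (hne : K.Nonempty) (hU : IsOpen U) (hUK : U ⊆ K) (hw : ContinuousOn w K)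
    (hw₂ : ∀ x ∈ U, ContDiffAt ℝ 2 w x) (hlap : ∀ x ∈ U, 0 < lapR w x) :
    ∃ y ∈ K \ U, IsMaxOn w K y := by
  obtain ⟨y, hyK, hymax⟩ := hK.exists_isMaxOn hne hw
  refine ⟨y, ⟨hyK, fun hyU => ?_⟩, hymax⟩
  have hloc : IsLocalMax w y := (hymax.on_subset hUK).isLocalMax (hU.mem_nhds hyU)
  exact (hloc.lapR_nonpos (hw₂ y hyU)).not_gt (hlap y hyU)

theorem closedBall_midpoint_subset_insert_ball {E : Type*} [NormedAddCommGroup E]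
    [InnerProductSpace ℝ E] {c z : E} {r : ℝ} (hz : z ∈ sphere c r) :
    closedBall (midpoint ℝ c z) (r / 2) ⊆ insert z (ball c r) := by
  intro x hx
  rcases eq_or_ne x z with rfl | hxz
  · exact Set.mem_insert _ _
  refine Set.mem_insert_of_mem _ (mem_ball_iff_norm.mpr ?_)
  set m := midpoint ℝ c z
  have hr : 0 ≤ r := mem_sphere.mp hz ▸ dist_nonneg
  have hxm : ‖x - m‖ ≤ r / 2 := mem_closedBall_iff_norm.mp hx
  have hmc : ‖m - c‖ = r / 2 := by
    rw [midpoint_sub_left, norm_smul, ← dist_eq_norm, mem_sphere.mp hz]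
    norm_num
    ring
  have hxz' : 0 < ‖x - z‖ := norm_pos_iff.mpr (sub_ne_zero.mpr hxz)
  have hzm : z - m = m - c := by rw [right_sub_midpoint, midpoint_sub_left]
  have hpar := parallelogram_law_with_norm ℝ (x - m) (m - c)
  rw [show x - m + (m - c) = x - c by abel, ← hzm, show x - m - (z - m) = x - z by abel, hzm,
    hmc] at hpar
  have hxm2 : ‖x - m‖ ^ 2 ≤ (r / 2) ^ 2 := pow_le_pow_left₀ (norm_nonneg _) hxm 2
  refine lt_of_pow_lt_pow_left₀ 2 hr ?_
  nlinarith [pow_pos hxz' 2]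

section Hopf

variable {u : ℂ → ℝ} {p z₀ : ℂ} {ρ : ℝ}

theorem lapR_add_smul_radialGaussian_pos (hρ : 0 < ρ) {δ : ℝ} (hδ : 0 < δ) {z : ℂ}
    (hu : ContDiffAt ℝ 2 u z) (hsub : 0 ≤ lapR u z) (hz : ρ / 2 < dist z p) :
    0 < lapR (u + δ • radialGaussian (8 / ρ ^ 2) p) z := by
  have hg : ContDiffAt ℝ 2 (δ • radialGaussian (8 / ρ ^ 2) p) z :=
    ((contDiff_radialGaussian _ p).const_smul δ).contDiffAt
  rw [lapR_add hu hg, lapR_const_smul, lapR_radialGaussian]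
  have : 1 < 8 / ρ ^ 2 * ‖z - p‖ ^ 2 := by
    rw [← dist_eq_norm, div_mul_eq_mul_div, lt_div_iff₀ (by positivity)]
    nlinarith
  have : 0 < 8 / ρ ^ 2 := by positivity
  nlinarith [mul_pos (mul_pos hδ this) (radialGaussian_pos (8 / ρ ^ 2) p z)]

theorem isMaxOn_add_smul_radialGaussian (hρ : 0 < ρ) (hz₀ : z₀ ∈ sphere p ρ)
    (hu : ContDiffOn ℝ 2 u (ball p ρ)) (hsub : ∀ z ∈ ball p ρ, 0 ≤ lapR u z)
    (hcont : ContinuousOn u (closedBall p ρ)) (hle : ∀ z ∈ closedBall p ρ, u z ≤ u z₀)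
    {δ : ℝ} (hδ : 0 < δ) (hgap : ∀ z ∈ sphere p (ρ / 2), u z + δ ≤ u z₀) :
    IsMaxOn (u + δ • radialGaussian (8 / ρ ^ 2) p) (closedBall p ρ \ ball p (ρ / 2)) z₀ := by
  have hg : ContDiff ℝ 2 (δ • radialGaussian (8 / ρ ^ 2) p) :=
    (contDiff_radialGaussian _ p).const_smul δ
  have hz₀K : z₀ ∈ closedBall p ρ \ ball p (ρ / 2) := by
    rw [mem_sphere] at hz₀
    simp only [Set.mem_sdiff, mem_closedBall, mem_ball, hz₀, not_lt]
    constructor <;> linarith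
  obtain ⟨y, ⟨hyK, hyU⟩, hymax⟩ :=
    ((isCompact_closedBall p ρ).diff isOpen_ball).exists_isMaxOn_mem_diff_of_lapR_pos ⟨z₀, hz₀K⟩
      (isOpen_ball.sdiff isClosed_closedBall)
      (sdiff_subset_sdiff ball_subset_closedBall ball_subset_closedBall)
      ((hcont.mono sdiff_subset).add hg.continuous.continuousOn)
      (fun x hx => (hu.contDiffAt (isOpen_ball.mem_nhds hx.1)).add hg.contDiffAt)
      (fun x hx => lapR_add_smul_radialGaussian_pos hρ hδ
        (hu.contDiffAt (isOpen_ball.mem_nhds hx.1)) (hsub x hx.1) (by simpa using hx.2))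
  refine fun x hx => le_trans (isMaxOn_iff.mp hymax x hx) ?_
  simp only [Pi.add_apply, Pi.smul_apply, smul_eq_mul]
  rw [Set.mem_sdiff, not_and_or, not_not] at hyU
  rcases hyU with hout | hin
  · have hy : dist y p = ρ := le_antisymm (mem_closedBall.mp hyK.1) (not_lt.mp hout)
    have : radialGaussian (8 / ρ ^ 2) p y = radialGaussian (8 / ρ ^ 2) p z₀ := by
      simp only [radialGaussian, ← dist_eq_norm, hy, mem_sphere.mp hz₀]
    rw [this]
    linarith [hle y hyK.1]
  · have hy : y ∈ sphere p (ρ / 2) :=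
      mem_sphere.mpr (le_antisymm (mem_closedBall.mp hin) (not_lt.mp hyK.2))
    have := mul_le_mul_of_nonneg_left
      (radialGaussian_le_one (by positivity : (0 : ℝ) ≤ 8 / ρ ^ 2) p y) hδ.le
    linarith [hgap y hy, mul_pos hδ (radialGaussian_pos (8 / ρ ^ 2) p z₀)]

theorem hopf_lemma (hρ : 0 < ρ) (hz₀ : z₀ ∈ sphere p ρ)
    (hu : ContDiffOn ℝ 2 u (ball p ρ)) (hsub : ∀ z ∈ ball p ρ, 0 ≤ lapR u z)
    (hcont : ContinuousOn u (closedBall p ρ)) (hlt : ∀ z ∈ ball p ρ, u z < u z₀)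
    (hdiff : DifferentiableAt ℝ u z₀) : fderiv ℝ u z₀ (p - z₀) < 0 := by
  have hle (z : ℂ) (hz : z ∈ closedBall p ρ) : u z ≤ u z₀ :=
    ((hcont z hz).mono ball_subset_closedBall).closure_le (by rwa [closure_ball p hρ.ne'])
      continuousWithinAt_const fun y hy => (hlt y hy).le
  have hsphere : sphere p (ρ / 2) ⊆ ball p ρ := sphere_subset_ball (by linarith)
  obtain ⟨x₁, hx₁, hmax₁⟩ := (isCompact_sphere p (ρ / 2)).exists_isMaxOn
    (NormedSpace.sphere_nonempty.mpr (by linarith))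
    (hcont.mono (hsphere.trans ball_subset_closedBall))
  set δ := u z₀ - u x₁
  have hδ : 0 < δ := sub_pos.mpr (hlt x₁ (hsphere hx₁))
  have hmax := isMaxOn_add_smul_radialGaussian hρ hz₀ hu hsub hcont hle hδ
    fun z hz => by linarith [show u z ≤ u x₁ from hmax₁ hz]
  have hseg : segment ℝ z₀ (midpoint ℝ z₀ p) ⊆ closedBall p ρ \ ball p (ρ / 2) := by
    rw [segment_eq_image']
    rintro _ ⟨θ, ⟨hθ₀, hθ₁⟩, rfl⟩
    have hdist : dist (z₀ + θ • (midpoint ℝ z₀ p - z₀)) p = (1 - θ / 2) * ρ := by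
      rw [midpoint_sub_left, dist_eq_norm, invOf_eq_inv,
        show z₀ + θ • ((2 : ℝ)⁻¹ • (p - z₀)) - p = (1 - θ / 2) • (z₀ - p) by module,
        norm_smul, Real.norm_of_nonneg (by linarith), ← dist_eq_norm, mem_sphere.mp hz₀]
    simp only [Set.mem_sdiff, mem_closedBall, mem_ball, hdist, not_lt]
    constructor <;> nlinarith
  have hD := hmax.localize.hasFDerivWithinAt_nonpos
    (hdiff.hasFDerivAt.add ((hasFDerivAt_radialGaussian _ p z₀).const_smul δ)).hasFDerivWithinAt
    (sub_mem_posTangentConeAt_of_segment_subset hseg)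
  have hinner_self : ⟪z₀ - p, p - z₀⟫ = -ρ ^ 2 := by
    rw [← neg_sub z₀ p, inner_neg_right, real_inner_self_eq_norm_sq, ← dist_eq_norm,
      mem_sphere.mp hz₀]
  simp only [midpoint_sub_left, invOf_eq_inv, map_smul, add_apply, FunLike.coe_smul,
    Pi.smul_apply, innerSL_apply_apply, hinner_self, smul_eq_mul] at hD
  have hbarrier : δ * (-2 * (8 / ρ ^ 2) * radialGaussian (8 / ρ ^ 2) p z₀ * -ρ ^ 2)
      = 16 * (δ * radialGaussian (8 / ρ ^ 2) p z₀) := by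
    field_simp
    ring
  rw [hbarrier] at hD
  linarith [mul_pos hδ (radialGaussian_pos (8 / ρ ^ 2) p z₀)]

end Hopf

theorem stmt18 (c : ℂ) (r : ℝ) (hr : 0 < r) (u : ℂ → ℝ) (z₀ : ℂ)
    (hz₀ : z₀ ∈ Metric.sphere c r)
    (hsm : ContDiffOn ℝ 2 u (Metric.ball c r))
    (hharm : ∀ z ∈ Metric.ball c r, lapR u z = 0)
    (hcont : ContinuousWithinAt u (Metric.ball c r) z₀)
    (hmax : ∀ ζ ∈ Metric.ball c r, u ζ < u z₀)
    (hdiff : DifferentiableAt ℝ u z₀) :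
    fderiv ℝ u z₀ (c - z₀) < 0 ∧ fderiv ℝ u z₀ ≠ 0 := by
  set p := midpoint ℝ c z₀
  have hz₀p : z₀ ∈ sphere p (r / 2) := by
    rw [mem_sphere, dist_right_midpoint, dist_comm, mem_sphere.mp hz₀]
    norm_num
    ring
  have hball : ball p (r / 2) ⊆ ball c r := ball_subset_ball' <| by
    rw [dist_midpoint_left, dist_comm, mem_sphere.mp hz₀]
    norm_num
    linarith
  have hcont' : ContinuousOn u (closedBall p (r / 2)) := by
    refine ContinuousOn.mono ?_ (closedBall_midpoint_subset_insert_ball hz₀)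
    rintro x (rfl | hx)
    · exact hcont.insert
    · exact (hsm.continuousOn.continuousAt (isOpen_ball.mem_nhds hx)).continuousWithinAt
  have hopf := hopf_lemma (by positivity) hz₀p (hsm.mono hball)
    (fun z hz => (hharm z (hball hz)).ge) hcont' (fun z hz => hmax z (hball hz)) hdiff
  rw [midpoint_sub_right, map_smul, invOf_eq_inv, smul_eq_mul] at hopf
  have hneg : fderiv ℝ u z₀ (c - z₀) < 0 := by linarith
  exact ⟨hneg, fun h => by simp [h] at hneg⟩
end
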